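/- arXiv:2109.13619 — 11 statements merged into one kernel-verified Lean document; each statement's English description precedes it below -/
import Mathlib

section
/- Deterministic uniqueness for the reflected Ornstein–Uhlenbeck equation: let b > 0, σ > 0, y₀ ≥ 0, and let W : [0,∞) → ℝ be continuous with W(0) = 0. Suppose Y₁, Y₂ : [0,∞) → ℝ are continuous and nonnegative, L₁ is a reflection function for Y₁, L₂ is a reflection function for Y₂, and for i = 1, 2 and all t ≥ 0, Yᵢ(t) = y₀ − (b/2)·∫₀ᵗ Yᵢ(s) ds + (σ/2)·W(t) + Lᵢ(t). Then Y₁(t) = Y₂(t) and L₁(t) = L₂(t) for all t ≥ 0. -/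
open Set Filter Topology

/-- `L` is a reflection function for `Y` on `[0, ∞)`: `L` is continuous, nondecreasing,
`L 0 = 0`, and `L` grows only at zeros of `Y`. -/
def IsReflectionFn (L Y : ℝ → ℝ) : Prop :=
  ContinuousOn L (Set.Ici 0) ∧ MonotoneOn L (Set.Ici 0) ∧ L 0 = 0 ∧
    ∀ s t : ℝ, 0 ≤ s → s ≤ t → (∀ u ∈ Set.Icc s t, 0 < Y u) → L t = L s

lemma aux_le (b σ y₀ : ℝ) (hb : 0 < b)
    (W : ℝ → ℝ)
    (Y₁ Y₂ L₁ L₂ : ℝ → ℝ)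
    (hY₁c : ContinuousOn Y₁ (Set.Ici 0)) (hY₂c : ContinuousOn Y₂ (Set.Ici 0))
    (hY₂nn : ∀ t, 0 ≤ t → 0 ≤ Y₂ t)
    (hL₁ : IsReflectionFn L₁ Y₁) (hL₂ : IsReflectionFn L₂ Y₂)
    (heq₁ : ∀ t, 0 ≤ t →
      Y₁ t = y₀ - (b / 2) * (∫ s in (0:ℝ)..t, Y₁ s) + (σ / 2) * W t + L₁ t)
    (heq₂ : ∀ t, 0 ≤ t →
      Y₂ t = y₀ - (b / 2) * (∫ s in (0:ℝ)..t, Y₂ s) + (σ / 2) * W t + L₂ t) :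
    ∀ t, 0 ≤ t → Y₁ t ≤ Y₂ t := by
  by_contra h
  push_neg at h
  obtain ⟨t, ht0, ht⟩ := h
  -- the set of times in [0, t] where Y₁ ≤ Y₂
  set S : Set ℝ := {s | s ∈ Icc 0 t ∧ Y₁ s ≤ Y₂ s} with hS
  have hY₁0 : Y₁ 0 = Y₂ 0 := by
    have h1 := heq₁ 0 le_rfl
    have h2 := heq₂ 0 le_rfl
    simp only [intervalIntegral.integral_same] at h1 h2
    rw [h1, h2, hL₁.2.2.1, hL₂.2.2.1]
  have h0S : (0 : ℝ) ∈ S := ⟨⟨le_rfl, ht0⟩, le_of_eq hY₁0⟩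
  have hSne : S.Nonempty := ⟨0, h0S⟩
  have hSbdd : BddAbove S := ⟨t, fun x hx => hx.1.2⟩
  have hSsub : S ⊆ Icc 0 t := fun x hx => hx.1
  have hScl : IsClosed S := by
    have hc : ContinuousOn (fun s => Y₁ s - Y₂ s) (Icc 0 t) :=
      (hY₁c.mono (Icc_subset_Ici_self)).sub (hY₂c.mono (Icc_subset_Ici_self))
    have : S = Icc 0 t ∩ (fun s => Y₁ s - Y₂ s) ⁻¹' (Iic 0) := by
      ext x; simp [hS, and_assoc, sub_nonpos]
    rw [this]
    exact hc.preimage_isClosed_of_isClosed isClosed_Icc isClosed_Iic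
  have hScomp : IsCompact S := isCompact_Icc.of_isClosed_subset hScl hSsub
  obtain ⟨a, ha⟩ : ∃ a, a = sSup S := ⟨_, rfl⟩
  have haS : a ∈ S := ha ▸ hScomp.sSup_mem hSne
  have ha0 : 0 ≤ a := haS.1.1
  have hat : a ≤ t := haS.1.2
  have halt : a < t := lt_of_le_of_ne hat (by rintro rfl; exact absurd haS.2 (not_le.mpr ht))
  -- on (a, t], Y₂ < Y₁
  have hpos : ∀ u, a < u → u ≤ t → Y₂ u < Y₁ u := by
    intro u hau hut
    by_contra hle
    push_neg at hle
    exact absurd (ha ▸ le_csSup hSbdd (⟨⟨ha0.trans hau.le, hut⟩, hle⟩ : u ∈ S)) (not_le.mpr hau)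
  -- Z a ≥ 0 by right continuity
  have hIocsub : Ioc a t ⊆ Ici (0:ℝ) := fun x hx => ha0.trans hx.1.le
  have hne : (𝓝[Ioc a t] a).NeBot := by
    rw [nhdsWithin_Ioc_eq_nhdsGT halt]
    infer_instance
  have hZa : 0 ≤ Y₁ a - Y₂ a := by
    have hcont : Tendsto (fun s => Y₁ s - Y₂ s) (𝓝[Ioc a t] a) (𝓝 (Y₁ a - Y₂ a)) := by
      have : ContinuousWithinAt (fun s => Y₁ s - Y₂ s) (Ici 0) a :=
        ((hY₁c a (mem_Ici.mpr ha0)).sub (hY₂c a (mem_Ici.mpr ha0)))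
      exact this.mono hIocsub
    refine ge_of_tendsto hcont ?_
    filter_upwards [self_mem_nhdsWithin] with u hu
    exact sub_nonneg.mpr (hpos u hu.1 hu.2).le
  -- L₁ t = L₁ a
  have hL₁const : L₁ t = L₁ a := by
    have hconst : ∀ u ∈ Ioc a t, L₁ t = L₁ u := by
      intro u hu
      refine hL₁.2.2.2 u t (ha0.trans hu.1.le) hu.2 ?_
      intro v hv
      exact lt_of_le_of_lt (hY₂nn v ((ha0.trans hu.1.le).trans hv.1))
        (hpos v (lt_of_lt_of_le hu.1 hv.1) hv.2)
    have hcont : Tendsto L₁ (𝓝[Ioc a t] a) (𝓝 (L₁ a)) :=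
      (hL₁.1 a (mem_Ici.mpr ha0)).mono_left (nhdsWithin_mono _ hIocsub)
    have hcont' : Tendsto L₁ (𝓝[Ioc a t] a) (𝓝 (L₁ t)) := by
      refine Tendsto.congr' ?_ tendsto_const_nhds
      filter_upwards [self_mem_nhdsWithin] with u hu
      exact hconst u hu
    exact tendsto_nhds_unique hcont' hcont
  -- integrability
  have hi₁0a : IntervalIntegrable Y₁ MeasureTheory.volume 0 a :=
    (hY₁c.mono (fun x hx => by
      rw [uIcc_of_le ha0] at hx; exact hx.1)).intervalIntegrable
  have hi₁at : IntervalIntegrable Y₁ MeasureTheory.volume a t :=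
    (hY₁c.mono (fun x hx => by
      rw [uIcc_of_le hat] at hx; exact ha0.trans hx.1)).intervalIntegrable
  have hi₂0a : IntervalIntegrable Y₂ MeasureTheory.volume 0 a :=
    (hY₂c.mono (fun x hx => by
      rw [uIcc_of_le ha0] at hx; exact hx.1)).intervalIntegrable
  have hi₂at : IntervalIntegrable Y₂ MeasureTheory.volume a t :=
    (hY₂c.mono (fun x hx => by
      rw [uIcc_of_le hat] at hx; exact ha0.trans hx.1)).intervalIntegrable
  have hsplit₁ : (∫ s in (0:ℝ)..t, Y₁ s) = (∫ s in (0:ℝ)..a, Y₁ s) + ∫ s in a..t, Y₁ s :=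
    (intervalIntegral.integral_add_adjacent_intervals hi₁0a hi₁at).symm
  have hsplit₂ : (∫ s in (0:ℝ)..t, Y₂ s) = (∫ s in (0:ℝ)..a, Y₂ s) + ∫ s in a..t, Y₂ s :=
    (intervalIntegral.integral_add_adjacent_intervals hi₂0a hi₂at).symm
  -- the integral of Z over [a, t] is nonneg
  have hintnn : 0 ≤ (∫ s in a..t, Y₁ s) - ∫ s in a..t, Y₂ s := by
    rw [← intervalIntegral.integral_sub hi₁at hi₂at]
    refine intervalIntegral.integral_nonneg hat ?_
    intro u hu
    rcases eq_or_lt_of_le hu.1 with rfl | hau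
    · exact hZa
    · exact sub_nonneg.mpr (hpos u hau hu.2).le
  -- conclude
  have e₁t := heq₁ t ht0
  have e₂t := heq₂ t ht0
  have e₁a := heq₁ a ha0
  have e₂a := heq₂ a ha0
  have hL₂mono : L₂ a ≤ L₂ t := hL₂.2.1 (mem_Ici.mpr ha0) (mem_Ici.mpr ht0) hat
  have hZa' : Y₁ a ≤ Y₂ a := haS.2
  nlinarith [ht, hZa, hintnn, hL₂mono]

/-- Deterministic uniqueness for the reflected Ornstein–Uhlenbeck equation. -/
theorem stmt_0 (b σ y₀ : ℝ) (hb : 0 < b) (hσ : 0 < σ) (hy₀ : 0 ≤ y₀)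
    (W : ℝ → ℝ) (hWc : ContinuousOn W (Set.Ici 0)) (hW0 : W 0 = 0)
    (Y₁ Y₂ L₁ L₂ : ℝ → ℝ)
    (hY₁c : ContinuousOn Y₁ (Set.Ici 0)) (hY₂c : ContinuousOn Y₂ (Set.Ici 0))
    (hY₁nn : ∀ t, 0 ≤ t → 0 ≤ Y₁ t) (hY₂nn : ∀ t, 0 ≤ t → 0 ≤ Y₂ t)
    (hL₁ : IsReflectionFn L₁ Y₁) (hL₂ : IsReflectionFn L₂ Y₂)
    (heq₁ : ∀ t, 0 ≤ t →
      Y₁ t = y₀ - (b / 2) * (∫ s in (0:ℝ)..t, Y₁ s) + (σ / 2) * W t + L₁ t)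
    (heq₂ : ∀ t, 0 ≤ t →
      Y₂ t = y₀ - (b / 2) * (∫ s in (0:ℝ)..t, Y₂ s) + (σ / 2) * W t + L₂ t) :
    ∀ t, 0 ≤ t → Y₁ t = Y₂ t ∧ L₁ t = L₂ t := by
  have h12 := aux_le b σ y₀ hb W Y₁ Y₂ L₁ L₂ hY₁c hY₂c hY₂nn hL₁ hL₂ heq₁ heq₂
  have h21 := aux_le b σ y₀ hb W Y₂ Y₁ L₂ L₁ hY₂c hY₁c hY₁nn hL₂ hL₁ heq₂ heq₁
  intro t ht
  have hY : ∀ s, 0 ≤ s → Y₁ s = Y₂ s := fun s hs => le_antisymm (h12 s hs) (h21 s hs)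
  have hYt : Y₁ t = Y₂ t := hY t ht
  refine ⟨hYt, ?_⟩
  have hint : (∫ s in (0:ℝ)..t, Y₁ s) = ∫ s in (0:ℝ)..t, Y₂ s := by
    refine intervalIntegral.integral_congr ?_
    intro s hs
    rw [uIcc_of_le ht] at hs
    exact hY s hs.1
  have e₁ := heq₁ t ht
  have e₂ := heq₂ t ht
  rw [hint] at e₁
  linarith
end

section
/- Grönwall-type sign lemma: let b > 0 and t₀ < t₁ be real numbers. Let f : [t₀,t₁] → ℝ be continuous with f(t₀) ≤ 0, and suppose that the function u ↦ f(u) + b·∫_{t₀}^{u} f(s) ds is nonincreasing on [t₀,t₁]. Then f(u) ≤ 0 for all u ∈ [t₀,t₁]. -/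
/-- Grönwall-type sign lemma: if `f` is continuous on `[t₀, t₁]`, `f t₀ ≤ 0`, and
`u ↦ f u + b * ∫_{t₀}^u f` is nonincreasing on `[t₀, t₁]`, then `f ≤ 0` on `[t₀, t₁]`. -/
theorem stmt_1 (b t₀ t₁ : ℝ) (hb : 0 < b) (ht : t₀ < t₁)
    (f : ℝ → ℝ) (hfc : ContinuousOn f (Set.Icc t₀ t₁)) (hf0 : f t₀ ≤ 0)
    (hanti : AntitoneOn (fun u => f u + b * ∫ s in t₀..u, f s) (Set.Icc t₀ t₁)) :
    ∀ u ∈ Set.Icc t₀ t₁, f u ≤ 0 := by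
  intro u hu
  by_contra hpos
  push_neg at hpos
  obtain ⟨hu0, hu1⟩ := hu
  -- the set of points ≤ u where f ≤ 0
  set S : Set ℝ := Set.Icc t₀ u ∩ f ⁻¹' Set.Iic 0 with hS
  have hne : t₀ ∈ S := ⟨⟨le_refl _, hu0⟩, hf0⟩
  have hbdd : BddAbove S := ⟨u, fun x hx => hx.1.2⟩
  have hsub : Set.Icc t₀ u ⊆ Set.Icc t₀ t₁ := Set.Icc_subset_Icc le_rfl hu1
  have hcu : ContinuousOn f (Set.Icc t₀ u) := hfc.mono hsub
  have hSclosed : IsClosed S :=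
    hcu.preimage_isClosed_of_isClosed isClosed_Icc isClosed_Iic
  set τ := sSup S with hτ
  have hτS : τ ∈ S := hSclosed.csSup_mem ⟨t₀, hne⟩ hbdd
  have hτle : τ ≤ u := hτS.1.2
  have hτ0 : t₀ ≤ τ := hτS.1.1
  have hfτ : f τ ≤ 0 := hτS.2
  have hτlt : τ < u := by
    rcases lt_or_eq_of_le hτle with h | h
    · exact h
    · exact absurd (h ▸ hfτ) (not_le.mpr hpos)
  have hposIoc : ∀ t ∈ Set.Ioc τ u, 0 ≤ f t := by
    intro t ⟨h1, h2⟩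
    by_contra hft
    push_neg at hft
    have : t ∈ S := ⟨⟨hτ0.trans h1.le, h2⟩, hft.le⟩
    exact absurd (le_csSup hbdd this) (not_le.mpr h1)
  -- integrability
  have hint : ∀ a c, a ∈ Set.Icc t₀ t₁ → c ∈ Set.Icc t₀ t₁ →
      IntervalIntegrable f MeasureTheory.volume a c := by
    intro a c ha hc
    exact (hfc.mono (Set.uIcc_subset_Icc ha hc)).intervalIntegrable
  have hτmem : τ ∈ Set.Icc t₀ t₁ := ⟨hτ0, hτle.trans hu1⟩
  have humem : u ∈ Set.Icc t₀ t₁ := ⟨hu0, hu1⟩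
  have ht0mem : t₀ ∈ Set.Icc t₀ t₁ := ⟨le_rfl, ht.le⟩
  have hsplit : (∫ s in t₀..τ, f s) + (∫ s in τ..u, f s) = ∫ s in t₀..u, f s :=
    intervalIntegral.integral_add_adjacent_intervals (hint _ _ ht0mem hτmem)
      (hint _ _ hτmem humem)
  have hintpos : 0 ≤ ∫ s in τ..u, f s := by
    rw [intervalIntegral.integral_of_le hτle]
    exact MeasureTheory.setIntegral_nonneg measurableSet_Ioc hposIoc
  have hmono := hanti hτmem humem hτlt.le
  simp only at hmono
  have : f u ≤ f τ - b * ∫ s in τ..u, f s := by nlinarith [hmono]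
  nlinarith
end

section
/- Comparison of solutions of the singular square-root equation: let y₀, b, σ > 0, let B : [0,∞) → ℝ be continuous with B(0) = 0, and let 0 < ε₂ < ε₁. Suppose Y₁, Y₂ : [0,∞) → ℝ are continuous, strictly positive, and satisfy E(ε₁) and E(ε₂) respectively (with the same y₀, b, σ, B). Then Y₂(t) ≤ Y₁(t) for all t ≥ 0. -/
/-!
The noise enters both equations additively with the same coefficient, so it cancels in
`D = Y₁ - Y₂`, which is therefore an indefinite integral of the drift difference and starts at `0`.
The drift `y ↦ ε / y - b y` is decreasing in `y` and increasing in `ε`, so wherever `Y₁ < Y₂` the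
integrand is nonnegative. If `D t < 0`, then on the interval from the last zero-crossing
`τ = sup {s ≤ t | D s ≥ 0}` up to `t` the function `D` can only increase, contradicting `D τ ≥ 0`.
-/

/-- A continuous, strictly positive `Y : [0, ∞) → ℝ` solves the singular equation `E(ε)`
if `Y t = y₀ + (1/2) ∫₀ᵗ (ε / Y s - b * Y s) ds + (σ/2) B t` for all `t ≥ 0`. -/
def SolvesE (y₀ b σ : ℝ) (B : ℝ → ℝ) (ε : ℝ) (Y : ℝ → ℝ) : Prop :=
  ContinuousOn Y (Set.Ici 0) ∧ (∀ t, 0 ≤ t → 0 < Y t) ∧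
    ∀ t, 0 ≤ t →
      Y t = y₀ + (1 / 2) * (∫ s in (0:ℝ)..t, (ε / Y s - b * Y s)) + (σ / 2) * B t

open Set MeasureTheory

theorem nonneg_of_integral_increments {D g : ℝ → ℝ} (hD : ContinuousOn D (Ici 0)) (hD0 : 0 ≤ D 0)
    (hinc : ∀ s t, 0 ≤ s → s ≤ t → D t - D s = ∫ u in s..t, g u)
    (hg : ∀ u, 0 ≤ u → D u < 0 → 0 ≤ g u) {t : ℝ} (ht : 0 ≤ t) : 0 ≤ D t := by
  by_contra! hneg
  set S := Icc 0 t ∩ D ⁻¹' Ici 0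
  have hS_closed : IsClosed S :=
    (hD.mono Icc_subset_Ici_self).preimage_isClosed_of_isClosed isClosed_Icc isClosed_Ici
  have hS_compact : IsCompact S := isCompact_Icc.of_isClosed_subset hS_closed inter_subset_left
  have h0S : (0 : ℝ) ∈ S := ⟨⟨le_rfl, ht⟩, hD0⟩
  set τ := sSup S
  obtain ⟨⟨hτ0, hτt⟩, hDτ⟩ : τ ∈ S := hS_compact.sSup_mem ⟨0, h0S⟩
  replace hDτ : 0 ≤ D τ := hDτ
  have hτ_lt : τ < t := hτt.lt_of_ne fun hτ => hDτ.not_gt (hτ ▸ hneg)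
  have hD_neg : ∀ u ∈ Ioc τ t, D u < 0 := by
    rintro u ⟨hτu, hut⟩
    by_contra! hDu
    have huS : u ∈ S := ⟨⟨hτ0.trans hτu.le, hut⟩, hDu⟩
    exact (le_csSup hS_compact.bddAbove huS).not_gt hτu
  have hint : 0 ≤ ∫ u in τ..t, g u := by
    rw [intervalIntegral.integral_of_le hτ_lt.le]
    exact setIntegral_nonneg measurableSet_Ioc fun u hu =>
      hg u (hτ0.trans hu.1.le) (hD_neg u hu)
  linarith [hinc τ t hτ0 hτ_lt.le]

theorem drift_le_drift {ε₁ ε₂ b y₁ y₂ : ℝ} (hε₁ : 0 ≤ ε₁) (hε : ε₂ ≤ ε₁) (hb : 0 ≤ b)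
    (hy₁ : 0 < y₁) (hy : y₁ ≤ y₂) : ε₂ / y₂ - b * y₂ ≤ ε₁ / y₁ - b * y₁ := by
  have hε_div : ε₂ / y₂ ≤ ε₁ / y₁ :=
    calc ε₂ / y₂ ≤ ε₁ / y₂ := by gcongr; linarith
      _ ≤ ε₁ / y₁ := by gcongr
  nlinarith

namespace SolvesE

variable {y₀ b σ ε : ℝ} {B Y : ℝ → ℝ}

theorem intervalIntegrable_drift (h : SolvesE y₀ b σ B ε Y) {s t : ℝ} (hs : 0 ≤ s) (ht : 0 ≤ t) :
    IntervalIntegrable (fun u => ε / Y u - b * Y u) volume s t := by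
  obtain ⟨hc, hpos, -⟩ := h
  have hdrift : ContinuousOn (fun u => ε / Y u - b * Y u) (Ici 0) :=
    (continuousOn_const.div hc fun u hu => (hpos u hu).ne').sub (continuousOn_const.mul hc)
  exact (hdrift.mono fun u hu => (le_min hs ht).trans hu.1).intervalIntegrable

theorem sub_eq_integral (h : SolvesE y₀ b σ B ε Y) {s t : ℝ} (hs : 0 ≤ s) (ht : 0 ≤ t) :
    Y t - Y s = (1 / 2) * (∫ u in s..t, (ε / Y u - b * Y u)) + (σ / 2) * (B t - B s) := by
  rw [← intervalIntegral.integral_interval_sub_left (h.intervalIntegrable_drift le_rfl ht)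
    (h.intervalIntegrable_drift le_rfl hs), h.2.2 t ht, h.2.2 s hs]
  ring

theorem eq_at_zero {ε' : ℝ} {Y' : ℝ → ℝ} (h : SolvesE y₀ b σ B ε Y) (h' : SolvesE y₀ b σ B ε' Y') :
    Y 0 = Y' 0 := by
  rw [h.2.2 0 le_rfl, h'.2.2 0 le_rfl, intervalIntegral.integral_same, intervalIntegral.integral_same]

end SolvesE

theorem stmt_2_general (y₀ b σ : ℝ) (hb : 0 < b)
    (B : ℝ → ℝ)
    (ε₁ ε₂ : ℝ) (hε₂ : 0 < ε₂) (hε : ε₂ < ε₁)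
    (Y₁ Y₂ : ℝ → ℝ) (h₁ : SolvesE y₀ b σ B ε₁ Y₁) (h₂ : SolvesE y₀ b σ B ε₂ Y₂) :
    ∀ t, 0 ≤ t → Y₂ t ≤ Y₁ t := by
  intro t ht
  have hinc : ∀ s t, 0 ≤ s → s ≤ t → (Y₁ t - Y₂ t) - (Y₁ s - Y₂ s) =
      ∫ u in s..t, (1 / 2) * ((ε₁ / Y₁ u - b * Y₁ u) - (ε₂ / Y₂ u - b * Y₂ u)) := by
    intro s t hs hst
    have ht := hs.trans hst
    rw [intervalIntegral.integral_const_mul, intervalIntegral.integral_sub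
      (h₁.intervalIntegrable_drift hs ht) (h₂.intervalIntegrable_drift hs ht)]
    linarith [h₁.sub_eq_integral hs ht, h₂.sub_eq_integral hs ht]
  have hdrift : ∀ u, 0 ≤ u → Y₁ u - Y₂ u < 0 →
      0 ≤ (1 / 2) * ((ε₁ / Y₁ u - b * Y₁ u) - (ε₂ / Y₂ u - b * Y₂ u)) := fun u hu hlt => by
    have := drift_le_drift (hε₂.trans hε).le hε.le hb.le (h₁.2.1 u hu) (sub_neg.mp hlt).le
    linarith
  have hD : 0 ≤ Y₁ t - Y₂ t := nonneg_of_integral_increments (D := fun s => Y₁ s - Y₂ s)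
    (h₁.1.sub h₂.1) (by rw [h₁.eq_at_zero h₂, sub_self]) hinc hdrift ht
  linarith

/-- Comparison of solutions of the singular square-root equation. -/
theorem stmt_2 (y₀ b σ : ℝ) (hy₀ : 0 < y₀) (hb : 0 < b) (hσ : 0 < σ)
    (B : ℝ → ℝ) (hBc : ContinuousOn B (Set.Ici 0)) (hB0 : B 0 = 0)
    (ε₁ ε₂ : ℝ) (hε₂ : 0 < ε₂) (hε : ε₂ < ε₁)
    (Y₁ Y₂ : ℝ → ℝ) (h₁ : SolvesE y₀ b σ B ε₁ Y₁) (h₂ : SolvesE y₀ b σ B ε₂ Y₂) :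
    ∀ t, 0 ≤ t → Y₂ t ≤ Y₁ t :=
  stmt_2_general y₀ b σ hb B ε₁ ε₂ hε₂ hε Y₁ Y₂ h₁ h₂
end

section
/- Comparison with the Ornstein–Uhlenbeck path: let y₀, b, σ > 0, let B : [0,∞) → ℝ be continuous with B(0) = 0, and let ε > 0. Suppose Y : [0,∞) → ℝ is continuous, strictly positive, and solves E(ε), and suppose U : [0,∞) → ℝ is continuous and satisfies U(t) = y₀ − (b/2)·∫₀ᵗ U(s) ds + (σ/2)·B(t) for all t ≥ 0. Then Y(t) ≥ U(t) for all t ≥ 0. -/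
/-!
Put `D = Y - U`. Subtracting the two integral equations cancels the noise and leaves
`D t = ∫₀ᵗ (ε / (2 Y s) - (b / 2) D s) ds`, so `D` solves the linear equation
`D' = ε / (2 Y) - (b / 2) D` with `D 0 = 0`. The integrating factor gives
`(e^{bt/2} D)' = e^{bt/2} ε / (2 Y) ≥ 0`, hence `e^{bt/2} D` is monotone on `[0, ∞)` and `D ≥ 0`.
-/

open Set MeasureTheory

lemma ContinuousOn.intervalIntegrable_of_Ici {f : ℝ → ℝ} {a t : ℝ}
    (hf : ContinuousOn f (Ici a)) (ht : a ≤ t) : IntervalIntegrable f volume a t :=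
  (hf.mono (by rw [uIcc_of_le ht]; exact Icc_subset_Ici_self)).intervalIntegrable

lemma ContinuousOn.hasDerivAt_integral_of_Ici {f : ℝ → ℝ} {a x : ℝ}
    (hf : ContinuousOn f (Ici a)) (hx : a < x) :
    HasDerivAt (fun t => ∫ s in a..t, f s) (f x) x :=
  intervalIntegral.integral_hasDerivAt_right (hf.intervalIntegrable_of_Ici hx.le)
    ((hf.mono Ioi_subset_Ici_self).stronglyMeasurableAtFilter isOpen_Ioi x hx)
    (hf.continuousAt (Ici_mem_nhds hx))

lemma nonneg_of_eq_integral_sub_const_mul {D g : ℝ → ℝ} (c : ℝ)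
    (hDc : ContinuousOn D (Ici 0)) (hgc : ContinuousOn g (Ici 0))
    (hg : ∀ t, 0 ≤ t → 0 ≤ g t)
    (hD : ∀ t, 0 ≤ t → D t = ∫ s in (0:ℝ)..t, (g s - c * D s)) :
    ∀ t, 0 ≤ t → 0 ≤ D t := by
  have hDderiv : ∀ x, 0 < x → HasDerivAt D (g x - c * D x) x := fun x hx =>
    ((hgc.sub (continuousOn_const.mul hDc)).hasDerivAt_integral_of_Ici hx).congr_of_eventuallyEq
      (Filter.eventually_of_mem (Ici_mem_nhds hx) hD)
  have hexp : Continuous fun t => Real.exp (c * t) := by fun_prop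
  have hmono : MonotoneOn (fun t => Real.exp (c * t) * D t) (Ici 0) := by
    refine monotoneOn_of_hasDerivWithinAt_nonneg (f' := fun x => Real.exp (c * x) * g x)
      (convex_Ici 0) (hexp.continuousOn.mul hDc) (fun x hx => ?_) (fun x hx => ?_)
    · rw [interior_Ici] at hx
      have hexpd : HasDerivAt (fun t => Real.exp (c * t)) (Real.exp (c * x) * c) x := by
        simpa using ((hasDerivAt_id x).const_mul c).exp
      exact ((hexpd.mul (hDderiv x hx)).congr_deriv (by ring)).hasDerivWithinAt
    · rw [interior_Ici] at hx
      exact mul_nonneg (Real.exp_pos _).le (hg x hx.le)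
  intro t ht
  have hD0 : D 0 = 0 := by simpa using hD 0 le_rfl
  have h := hmono self_mem_Ici ht ht
  simp only [mul_zero, Real.exp_zero, hD0] at h
  exact nonneg_of_mul_nonneg_right h (Real.exp_pos _)

lemma SolvesE.sub_eq_integral_s3 {y₀ b σ ε : ℝ} {B Y U : ℝ → ℝ}
    (hY : SolvesE y₀ b σ B ε Y) (hUc : ContinuousOn U (Ici 0))
    (hU : ∀ t, 0 ≤ t → U t = y₀ - (b / 2) * (∫ s in (0:ℝ)..t, U s) + (σ / 2) * B t)
    (t : ℝ) (ht : 0 ≤ t) :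
    Y t - U t = ∫ s in (0:ℝ)..t, (ε / (2 * Y s) - b / 2 * (Y s - U s)) := by
  obtain ⟨hYc, hYpos, hYeq⟩ := hY
  have hYint : IntervalIntegrable (fun s => ε / Y s - b * Y s) volume 0 t :=
    ((continuousOn_const.div hYc fun s hs => (hYpos s hs).ne').sub
      (continuousOn_const.mul hYc)).intervalIntegrable_of_Ici ht
  have hcongr : EqOn (fun s => ε / (2 * Y s) - b / 2 * (Y s - U s))
      (fun s => 1 / 2 * (ε / Y s - b * Y s) + b / 2 * U s) (uIcc 0 t) := fun s hs => by
    have hYs := (hYpos s (by rw [uIcc_of_le ht] at hs; exact hs.1)).ne'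
    field_simp
    ring
  rw [intervalIntegral.integral_congr hcongr, intervalIntegral.integral_add
      (hYint.const_mul _) ((hUc.intervalIntegrable_of_Ici ht).const_mul _),
    intervalIntegral.integral_const_mul, intervalIntegral.integral_const_mul, hYeq t ht, hU t ht]
  ring

theorem stmt_3_general (y₀ b σ : ℝ)
    (B : ℝ → ℝ)
    (ε : ℝ) (hε : 0 < ε)
    (Y : ℝ → ℝ) (hY : SolvesE y₀ b σ B ε Y)
    (U : ℝ → ℝ) (hUc : ContinuousOn U (Set.Ici 0))
    (hU : ∀ t, 0 ≤ t →
      U t = y₀ - (b / 2) * (∫ s in (0:ℝ)..t, U s) + (σ / 2) * B t) :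
    ∀ t, 0 ≤ t → U t ≤ Y t := by
  obtain ⟨hYc, hYpos, -⟩ := id hY
  have hforcing : ContinuousOn (fun s => ε / (2 * Y s)) (Ici 0) :=
    continuousOn_const.div (continuousOn_const.mul hYc) fun s hs => by
      have := hYpos s hs; positivity
  intro t ht
  have hD := nonneg_of_eq_integral_sub_const_mul (b / 2) (hYc.sub hUc) hforcing
    (fun s hs => by have := hYpos s hs; positivity) (hY.sub_eq_integral_s3 hUc hU) t ht
  exact sub_nonneg.mp hD

/-- Comparison with the Ornstein–Uhlenbeck path: a solution of `E(ε)` dominates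
the OU path driven by the same noise path. -/
theorem stmt_3 (y₀ b σ : ℝ) (hy₀ : 0 < y₀) (hb : 0 < b) (hσ : 0 < σ)
    (B : ℝ → ℝ) (hBc : ContinuousOn B (Set.Ici 0)) (hB0 : B 0 = 0)
    (ε : ℝ) (hε : 0 < ε)
    (Y : ℝ → ℝ) (hY : SolvesE y₀ b σ B ε Y)
    (U : ℝ → ℝ) (hUc : ContinuousOn U (Set.Ici 0))
    (hU : ∀ t, 0 ≤ t →
      U t = y₀ - (b / 2) * (∫ s in (0:ℝ)..t, U s) + (σ / 2) * B t) :
    ∀ t, 0 ≤ t → U t ≤ Y t :=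
  stmt_3_general y₀ b σ B ε hε Y hY U hUc hU
end

section
/- Monotonicity of the correction integrals: let y₀, b, σ > 0, let B : [0,∞) → ℝ be continuous with B(0) = 0, and let 0 < ε₂ < ε₁. Suppose Y₁, Y₂ : [0,∞) → ℝ are continuous, strictly positive, and satisfy E(ε₁) and E(ε₂) respectively (with the same y₀, b, σ, B). Then for every t ≥ 0, (1/2)·∫₀ᵗ ε₂/Y₂(s) ds ≤ (1/2)·∫₀ᵗ ε₁/Y₁(s) ds. -/
open MeasureTheory Set intervalIntegral

lemma uIcc_subset_Ici' {a b : ℝ} (ha : 0 ≤ a) (hb : 0 ≤ b) :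
    Set.uIcc a b ⊆ Set.Ici 0 := fun x hx => le_trans (le_min ha hb) hx.1

lemma contOn_div {Y : ℝ → ℝ} (hc : ContinuousOn Y (Set.Ici 0))
    (hp : ∀ t, 0 ≤ t → 0 < Y t) (c : ℝ) {s : Set ℝ} (hs : s ⊆ Set.Ici 0) :
    ContinuousOn (fun u => c / Y u) s :=
  continuousOn_const.div (hc.mono hs) (fun x hx => (hp x (hs hx)).ne')

lemma intInt_div {Y : ℝ → ℝ} (hc : ContinuousOn Y (Set.Ici 0))
    (hp : ∀ t, 0 ≤ t → 0 < Y t) {a b : ℝ} (ha : 0 ≤ a) (hb : 0 ≤ b) (c : ℝ) :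
    IntervalIntegrable (fun s => c / Y s) volume a b :=
  (contOn_div hc hp c (uIcc_subset_Ici' ha hb)).intervalIntegrable

lemma intInt_mul {Y : ℝ → ℝ} (hc : ContinuousOn Y (Set.Ici 0))
    {a b : ℝ} (ha : 0 ≤ a) (hb : 0 ≤ b) (c : ℝ) :
    IntervalIntegrable (fun s => c * Y s) volume a b :=
  (continuousOn_const.mul (hc.mono (uIcc_subset_Ici' ha hb))).intervalIntegrable

lemma intInt_f {Y : ℝ → ℝ} (hc : ContinuousOn Y (Set.Ici 0))
    (hp : ∀ t, 0 ≤ t → 0 < Y t) {a b : ℝ} (ha : 0 ≤ a) (hb : 0 ≤ b) (ε c : ℝ) :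
    IntervalIntegrable (fun s => ε / Y s - c * Y s) volume a b :=
  (intInt_div hc hp ha hb ε).sub (intInt_mul hc ha hb c)

/-- Value at 0 of a solution. -/
lemma solves_at_zero {y₀ b σ : ℝ} {B : ℝ → ℝ} (hB0 : B 0 = 0) {ε : ℝ} {Y : ℝ → ℝ}
    (h : SolvesE y₀ b σ B ε Y) : Y 0 = y₀ := by
  have := h.2.2 0 le_rfl
  simpa [hB0] using this

/-- The difference of two solutions equals one half of the integral of the
difference of the drifts. -/
lemma diff_eq {y₀ b σ : ℝ} {B : ℝ → ℝ} {ε₁ ε₂ : ℝ} {Y₁ Y₂ : ℝ → ℝ}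
    (h₁ : SolvesE y₀ b σ B ε₁ Y₁) (h₂ : SolvesE y₀ b σ B ε₂ Y₂)
    {t : ℝ} (ht : 0 ≤ t) :
    Y₁ t - Y₂ t
      = (1 / 2) * ∫ s in (0:ℝ)..t,
          ((ε₁ / Y₁ s - b * Y₁ s) - (ε₂ / Y₂ s - b * Y₂ s)) := by
  rw [intervalIntegral.integral_sub (intInt_f h₁.1 h₁.2.1 le_rfl ht ε₁ b)
    (intInt_f h₂.1 h₂.2.1 le_rfl ht ε₂ b)]
  have e₁ := h₁.2.2 t ht
  have e₂ := h₂.2.2 t ht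
  rw [e₁, e₂]; ring

/-- Comparison: the solution with the larger singular parameter dominates. -/
lemma comparison {y₀ b σ : ℝ} {B : ℝ → ℝ} {ε₁ ε₂ : ℝ} (hε₂ : 0 < ε₂) (hε : ε₂ < ε₁)
    {Y₁ Y₂ : ℝ → ℝ} (hB0 : B 0 = 0)
    (h₁ : SolvesE y₀ b σ B ε₁ Y₁) (h₂ : SolvesE y₀ b σ B ε₂ Y₂) (hb : 0 < b) :
    ∀ t, 0 ≤ t → Y₂ t ≤ Y₁ t := by
  by_contra hcon
  push_neg at hcon
  obtain ⟨t₀, ht₀, hlt⟩ := hcon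
  set D : ℝ → ℝ := fun t => Y₁ t - Y₂ t with hD
  have hD0 : D 0 = 0 := by
    simp [hD, solves_at_zero hB0 h₁, solves_at_zero hB0 h₂]
  have hDt₀ : D t₀ < 0 := sub_neg.2 hlt
  have hDc : ContinuousOn D (Set.Ici 0) := h₁.1.sub h₂.1
  -- the set of zeros of D in [0, t₀]
  set S : Set ℝ := {s ∈ Set.Icc 0 t₀ | D s = 0} with hS
  have hS0 : (0:ℝ) ∈ S := ⟨⟨le_rfl, ht₀⟩, hD0⟩
  have hSne : S.Nonempty := ⟨0, hS0⟩
  have hSbdd : BddAbove S := ⟨t₀, fun x hx => hx.1.2⟩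
  have hSclosed : IsClosed S := by
    have : S = Set.Icc 0 t₀ ∩ D ⁻¹' {0} := by
      ext x; simp [hS, Set.mem_setOf_eq, and_comm]
    rw [this]
    exact (hDc.mono (fun x hx => hx.1)).preimage_isClosed_of_isClosed
      isClosed_Icc isClosed_singleton
  set τ := sSup S with hτ
  have hτmem : τ ∈ S := hSclosed.csSup_mem hSne hSbdd
  have hτ0 : 0 ≤ τ := hτmem.1.1
  have hττ : τ ≤ t₀ := hτmem.1.2
  have hDτ : D τ = 0 := hτmem.2
  have hτlt : τ < t₀ := lt_of_le_of_ne hττ (fun h => absurd (h ▸ hDτ) hDt₀.ne)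
  -- on (τ, t₀], D < 0
  have hneg : ∀ s, τ < s → s ≤ t₀ → D s < 0 := by
    intro s hs hst₀
    by_contra hns
    push_neg at hns
    rcases eq_or_lt_of_le hns with heq | hpos
    · exact absurd (le_csSup hSbdd ⟨⟨le_trans hτ0 hs.le, hst₀⟩, heq.symm⟩) (not_le.2 hs)
    · -- D s > 0 > D t₀ so D has a zero in [s, t₀], beyond τ
      have hcont : ContinuousOn D (Set.Icc s t₀) :=
        hDc.mono (fun x hx => le_trans (le_trans hτ0 hs.le) hx.1)
      have h0mem : (0:ℝ) ∈ Set.Icc (D t₀) (D s) := ⟨hDt₀.le, hpos.le⟩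
      obtain ⟨c, hc, hDc0⟩ := intermediate_value_Icc' hst₀ hcont h0mem
      have hcτ : c ≤ τ :=
        le_csSup hSbdd ⟨⟨le_trans (le_trans hτ0 hs.le) hc.1, hc.2⟩, hDc0⟩
      have : τ < c := lt_of_lt_of_le hs hc.1
      linarith
  -- split the basic identity at τ
  have hkey : D t₀ - D τ = (1 / 2) * ∫ s in τ..t₀,
      ((ε₁ / Y₁ s - b * Y₁ s) - (ε₂ / Y₂ s - b * Y₂ s)) := by
    have e₁ := diff_eq h₁ h₂ ht₀
    have e₂ := diff_eq h₁ h₂ hτ0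
    have hadd := intervalIntegral.integral_add_adjacent_intervals
      ((intInt_f h₁.1 h₁.2.1 le_rfl hτ0 ε₁ b).sub (intInt_f h₂.1 h₂.2.1 le_rfl hτ0 ε₂ b))
      ((intInt_f h₁.1 h₁.2.1 hτ0 ht₀ ε₁ b).sub (intInt_f h₂.1 h₂.2.1 hτ0 ht₀ ε₂ b))
    simp only [hD]
    linarith [e₁, e₂, hadd]
  -- the integrand is nonnegative on [τ, t₀]
  have hnn : 0 ≤ ∫ s in τ..t₀, ((ε₁ / Y₁ s - b * Y₁ s) - (ε₂ / Y₂ s - b * Y₂ s)) := by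
    apply intervalIntegral.integral_nonneg hττ
    intro u hu
    have hu0 : 0 ≤ u := le_trans hτ0 hu.1
    have hY₁ : 0 < Y₁ u := h₁.2.1 u hu0
    have hY₂ : 0 < Y₂ u := h₂.2.1 u hu0
    have hle : Y₁ u ≤ Y₂ u := by
      rcases eq_or_lt_of_le hu.1 with heq | hlt'
      · have : D u = 0 := heq ▸ hDτ
        simp only [hD] at this; linarith
      · have := hneg u hlt' hu.2
        simp only [hD] at this; linarith
    have hdiv : ε₂ / Y₂ u ≤ ε₁ / Y₁ u :=
      div_le_div₀ (le_of_lt (lt_trans hε₂ hε)) hε.le hY₁ hle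
    have hbm : 0 ≤ b * (Y₂ u - Y₁ u) := mul_nonneg hb.le (by linarith)
    nlinarith
  clear_value τ
  simp only [hD] at hkey hDτ hDt₀
  linarith [hkey, hnn, hDτ, hDt₀]

/-- Monotonicity of the correction integrals in the singular parameter. -/
theorem stmt_4 (y₀ b σ : ℝ) (hy₀ : 0 < y₀) (hb : 0 < b) (hσ : 0 < σ)
    (B : ℝ → ℝ) (hBc : ContinuousOn B (Set.Ici 0)) (hB0 : B 0 = 0)
    (ε₁ ε₂ : ℝ) (hε₂ : 0 < ε₂) (hε : ε₂ < ε₁)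
    (Y₁ Y₂ : ℝ → ℝ) (h₁ : SolvesE y₀ b σ B ε₁ Y₁) (h₂ : SolvesE y₀ b σ B ε₂ Y₂) :
    ∀ t, 0 ≤ t →
      (1 / 2) * (∫ s in (0:ℝ)..t, ε₂ / Y₂ s) ≤ (1 / 2) * (∫ s in (0:ℝ)..t, ε₁ / Y₁ s) := by
  intro t ht
  have hcomp := comparison hε₂ hε hB0 h₁ h₂ hb
  -- rewrite each correction integral from the equation
  have key : ∀ (ε : ℝ) (Y : ℝ → ℝ), SolvesE y₀ b σ B ε Y →
      (1 / 2) * (∫ s in (0:ℝ)..t, ε / Y s)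
        = Y t - y₀ - (σ / 2) * B t + (1 / 2) * ∫ s in (0:ℝ)..t, b * Y s := by
    intro ε Y h
    have e := h.2.2 t ht
    rw [intervalIntegral.integral_sub (intInt_div h.1 h.2.1 le_rfl ht ε)
      (intInt_mul h.1 le_rfl ht b)] at e
    linarith
  rw [key ε₁ Y₁ h₁, key ε₂ Y₂ h₂]
  have hY : Y₂ t ≤ Y₁ t := hcomp t ht
  have hint : (∫ s in (0:ℝ)..t, b * Y₂ s) ≤ ∫ s in (0:ℝ)..t, b * Y₁ s := by
    apply intervalIntegral.integral_mono_on ht (intInt_mul h₂.1 le_rfl ht b)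
      (intInt_mul h₁.1 le_rfl ht b)
    intro x hx
    exact mul_le_mul_of_nonneg_left (hcomp x hx.1) hb.le
  linarith
end

section
/- Existence of the pointwise limits and the limit equation: let y₀, b, σ > 0, let B : [0,∞) → ℝ be continuous with B(0) = 0, let (εₙ)ₙ be a strictly decreasing sequence of positive reals with εₙ → 0, and for each n let Yₙ : [0,∞) → ℝ be continuous, strictly positive, and solve E(εₙ). Then for every t ≥ 0 the limits Y(t) := limₙ Yₙ(t) and L(t) := limₙ (1/2)·∫₀ᵗ εₙ/Yₙ(s) ds exist, are finite and nonnegative, and Y(t) = y₀ − (b/2)·∫₀ᵗ Y(s) ds + (σ/2)·B(t) + L(t) for all t ≥ 0. -/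
open MeasureTheory intervalIntegral Filter Set

lemma solves_intable {y₀ b σ ε : ℝ} {B Y : ℝ → ℝ} (h : SolvesE y₀ b σ B ε Y)
    {a c : ℝ} (ha : 0 ≤ a) (hac : a ≤ c) :
    IntervalIntegrable (fun s => ε / Y s - b * Y s) volume a c ∧
    IntervalIntegrable (fun s => ε / Y s) volume a c ∧
    IntervalIntegrable Y volume a c := by
  obtain ⟨hc, hpos, _⟩ := h
  have hsub : Set.uIcc a c ⊆ Set.Ici 0 := by
    rw [Set.uIcc_of_le hac]
    exact fun x hx => ha.trans hx.1
  have hYc : ContinuousOn Y (Set.uIcc a c) := hc.mono hsub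
  have hinv : ContinuousOn (fun s => ε / Y s) (Set.uIcc a c) :=
    continuousOn_const.div hYc (fun x hx => (hpos x (hsub hx)).ne')
  exact ⟨(hinv.sub (continuousOn_const.mul hYc)).intervalIntegrable,
    hinv.intervalIntegrable, hYc.intervalIntegrable⟩

lemma solves_init {y₀ b σ ε : ℝ} {B Y : ℝ → ℝ} (hB0 : B 0 = 0)
    (h : SolvesE y₀ b σ B ε Y) : Y 0 = y₀ := by
  have := h.2.2 0 le_rfl
  simpa [hB0] using this

lemma solves_comp {y₀ b σ : ℝ} (hb : 0 < b) {B : ℝ → ℝ} (hB0 : B 0 = 0)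
    {ε₁ ε₂ : ℝ} (hε₂ : 0 < ε₂) (hε : ε₂ ≤ ε₁) {Y₁ Y₂ : ℝ → ℝ}
    (h₁ : SolvesE y₀ b σ B ε₁ Y₁) (h₂ : SolvesE y₀ b σ B ε₂ Y₂) :
    ∀ t, 0 ≤ t → Y₂ t ≤ Y₁ t := by
  intro t₀ ht₀
  by_contra hlt
  push_neg at hlt
  -- hlt : Y₁ t₀ < Y₂ t₀
  set S := {s : ℝ | s ∈ Set.Icc 0 t₀ ∧ 0 ≤ Y₁ s - Y₂ s} with hS
  have h0S : (0:ℝ) ∈ S := by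
    refine ⟨⟨le_rfl, ht₀⟩, ?_⟩
    rw [solves_init hB0 h₁, solves_init hB0 h₂]
    simp
  have hbdd : BddAbove S := ⟨t₀, fun x hx => hx.1.2⟩
  have hIcc : Set.Icc (0:ℝ) t₀ ⊆ Set.Ici 0 := fun x hx => hx.1
  have hclosed : IsClosed S := by
    have hD : ContinuousOn (fun s => Y₁ s - Y₂ s) (Set.Icc 0 t₀) :=
      (h₁.1.mono hIcc).sub (h₂.1.mono hIcc)
    have : S = Set.Icc 0 t₀ ∩ (fun s => Y₁ s - Y₂ s) ⁻¹' Set.Ici 0 := by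
      ext x; simp [hS, Set.mem_setOf_eq, and_comm]
    rw [this]
    exact hD.preimage_isClosed_of_isClosed isClosed_Icc isClosed_Ici
  set τ := sSup S with hτ
  have hτS : τ ∈ S := hclosed.csSup_mem ⟨0, h0S⟩ hbdd
  have hτ0 : 0 ≤ τ := hτS.1.1
  have hτt₀ : τ ≤ t₀ := hτS.1.2
  have hDτ : 0 ≤ Y₁ τ - Y₂ τ := hτS.2
  have hneg : ∀ s ∈ Set.Ioc τ t₀, Y₁ s - Y₂ s < 0 := by
    intro s hs
    by_contra h
    push_neg at h
    have hsS : s ∈ S := ⟨⟨hτ0.trans hs.1.le, hs.2⟩, h⟩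
    exact absurd (le_csSup hbdd hsS) (not_le.2 hs.1)
  obtain ⟨i1a, _, _⟩ := solves_intable h₁ le_rfl hτ0
  obtain ⟨i1b, j1b, k1b⟩ := solves_intable h₁ hτ0 hτt₀
  obtain ⟨i2a, _, _⟩ := solves_intable h₂ le_rfl hτ0
  obtain ⟨i2b, j2b, k2b⟩ := solves_intable h₂ hτ0 hτt₀
  have sp1 : (∫ s in (0:ℝ)..τ, (ε₁ / Y₁ s - b * Y₁ s))
      + (∫ s in τ..t₀, (ε₁ / Y₁ s - b * Y₁ s))
      = ∫ s in (0:ℝ)..t₀, (ε₁ / Y₁ s - b * Y₁ s) :=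
    intervalIntegral.integral_add_adjacent_intervals i1a i1b
  have sp2 : (∫ s in (0:ℝ)..τ, (ε₂ / Y₂ s - b * Y₂ s))
      + (∫ s in τ..t₀, (ε₂ / Y₂ s - b * Y₂ s))
      = ∫ s in (0:ℝ)..t₀, (ε₂ / Y₂ s - b * Y₂ s) :=
    intervalIntegral.integral_add_adjacent_intervals i2a i2b
  have hsub : (∫ s in τ..t₀, ((ε₁ / Y₁ s - b * Y₁ s) - (ε₂ / Y₂ s - b * Y₂ s)))
      = (∫ s in τ..t₀, (ε₁ / Y₁ s - b * Y₁ s)) - ∫ s in τ..t₀, (ε₂ / Y₂ s - b * Y₂ s) :=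
    intervalIntegral.integral_sub i1b i2b
  have hnn : 0 ≤ ∫ s in τ..t₀, ((ε₁ / Y₁ s - b * Y₁ s) - (ε₂ / Y₂ s - b * Y₂ s)) := by
    rw [intervalIntegral.integral_of_le hτt₀]
    apply setIntegral_nonneg measurableSet_Ioc
    intro s hs
    have hs0 : 0 ≤ s := hτ0.trans hs.1.le
    have h1p := h₁.2.1 s hs0
    have h2p := h₂.2.1 s hs0
    have hDs := hneg s hs
    have hY12 : Y₁ s < Y₂ s := by linarith
    have hdiv : ε₂ / Y₂ s ≤ ε₁ / Y₁ s := by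
      have h1 : ε₂ / Y₂ s ≤ ε₂ / Y₁ s := by gcongr
      have h2 : ε₂ / Y₁ s ≤ ε₁ / Y₁ s := by gcongr
      linarith
    have hmul : b * Y₁ s < b * Y₂ s := by
      exact (mul_lt_mul_iff_right₀ hb).2 hY12
    linarith
  have e1t := h₁.2.2 t₀ ht₀
  have e1τ := h₁.2.2 τ hτ0
  have e2t := h₂.2.2 t₀ ht₀
  have e2τ := h₂.2.2 τ hτ0
  linarith

/-- Existence of the pointwise limits of `Yₙ` and of the correction integrals,
and the limit (reflected OU) equation. -/
theorem stmt_5 (y₀ b σ : ℝ) (hy₀ : 0 < y₀) (hb : 0 < b) (hσ : 0 < σ)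
    (B : ℝ → ℝ) (hBc : ContinuousOn B (Set.Ici 0)) (hB0 : B 0 = 0)
    (εs : ℕ → ℝ) (hεpos : ∀ n, 0 < εs n) (hεdec : StrictAnti εs)
    (hεlim : Filter.Tendsto εs Filter.atTop (nhds 0))
    (Yn : ℕ → ℝ → ℝ) (hYn : ∀ n, SolvesE y₀ b σ B (εs n) (Yn n)) :
    ∃ Y L : ℝ → ℝ, ∀ t, 0 ≤ t →
      (0 ≤ Y t ∧ Filter.Tendsto (fun n => Yn n t) Filter.atTop (nhds (Y t))) ∧
      (0 ≤ L t ∧ Filter.Tendsto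
        (fun n => (1 / 2) * ∫ s in (0:ℝ)..t, εs n / Yn n s) Filter.atTop (nhds (L t))) ∧
      Y t = y₀ - (b / 2) * (∫ s in (0:ℝ)..t, Y s) + (σ / 2) * B t + L t := by
  have hanti : ∀ t, 0 ≤ t → Antitone (fun n => Yn n t) := by
    intro t ht
    apply antitone_nat_of_succ_le
    intro n
    exact solves_comp hb hB0 (hεpos (n+1)) (hεdec (Nat.lt_succ_self n)).le
      (hYn n) (hYn (n+1)) t ht
  set Y : ℝ → ℝ := fun t => ⨅ n, Yn n t with hYdef
  have hbdd : ∀ t, 0 ≤ t → BddBelow (Set.range fun n => Yn n t) := fun t ht =>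
    ⟨0, fun x hx => by obtain ⟨n, rfl⟩ := hx; exact ((hYn n).2.1 t ht).le⟩
  have hYlim : ∀ t, 0 ≤ t → Tendsto (fun n => Yn n t) atTop (nhds (Y t)) := fun t ht =>
    tendsto_atTop_ciInf (hanti t ht) (hbdd t ht)
  have hYnn : ∀ t, 0 ≤ t → 0 ≤ Y t := fun t ht =>
    le_ciInf fun n => ((hYn n).2.1 t ht).le
  -- convergence of ∫ Yn
  have hint : ∀ t, 0 ≤ t → Tendsto (fun n => ∫ s in (0:ℝ)..t, Yn n s) atTop
      (nhds (∫ s in (0:ℝ)..t, Y s)) := by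
    intro t ht
    have huIoc : Set.uIoc (0:ℝ) t = Set.Ioc 0 t := Set.uIoc_of_le ht
    have hmem : ∀ x ∈ Set.Ioc (0:ℝ) t, (0:ℝ) ≤ x := fun x hx => hx.1.le
    apply intervalIntegral.tendsto_integral_filter_of_dominated_convergence (Yn 0)
    · refine Filter.Eventually.of_forall fun n => ?_
      have : ContinuousOn (Yn n) (Set.uIoc (0:ℝ) t) := by
        rw [huIoc]
        exact (hYn n).1.mono fun x hx => hx.1.le
      exact this.aestronglyMeasurable measurableSet_uIoc
    · refine Filter.Eventually.of_forall fun n => ?_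
      rw [huIoc]
      refine ae_of_all _ fun x hx => ?_
      rw [Real.norm_eq_abs, abs_of_pos ((hYn n).2.1 x (hmem x hx))]
      exact hanti x (hmem x hx) (Nat.zero_le n)
    · have : ContinuousOn (Yn 0) (Set.uIcc (0:ℝ) t) := by
        rw [Set.uIcc_of_le ht]
        exact (hYn 0).1.mono fun x hx => hx.1
      exact this.intervalIntegrable
    · rw [huIoc]
      exact ae_of_all _ fun x hx => hYlim x (hmem x hx)
  -- identity for the correction integral
  have hA : ∀ n t, 0 ≤ t → (1/2) * (∫ s in (0:ℝ)..t, εs n / Yn n s)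
      = Yn n t - y₀ + (b/2) * (∫ s in (0:ℝ)..t, Yn n s) - (σ/2) * B t := by
    intro n t ht
    obtain ⟨i0, i1, i2⟩ := solves_intable (hYn n) le_rfl ht
    have heq := (hYn n).2.2 t ht
    have hsplit : (∫ s in (0:ℝ)..t, (εs n / Yn n s - b * Yn n s))
        = (∫ s in (0:ℝ)..t, εs n / Yn n s) - b * ∫ s in (0:ℝ)..t, Yn n s := by
      rw [intervalIntegral.integral_sub i1 (i2.const_mul b),
        intervalIntegral.integral_const_mul]
    rw [heq, hsplit]; ring
  set L : ℝ → ℝ := fun t => Y t - y₀ + (b/2) * (∫ s in (0:ℝ)..t, Y s) - (σ/2) * B t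
    with hLdef
  refine ⟨Y, L, fun t ht => ?_⟩
  have hLten : Tendsto (fun n => (1/2) * ∫ s in (0:ℝ)..t, εs n / Yn n s) atTop
      (nhds (L t)) := by
    have h1 : Tendsto (fun n => Yn n t - y₀ + (b/2) * (∫ s in (0:ℝ)..t, Yn n s)
        - (σ/2) * B t) atTop (nhds (L t)) := by
      exact (((hYlim t ht).sub_const y₀).add ((hint t ht).const_mul (b/2))).sub_const
        ((σ/2) * B t)
    exact h1.congr fun n => (hA n t ht).symm
  have hLnn : 0 ≤ L t := by
    refine ge_of_tendsto' hLten fun n => ?_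
    have : 0 ≤ ∫ s in (0:ℝ)..t, εs n / Yn n s := by
      apply intervalIntegral.integral_nonneg ht
      intro u hu
      exact div_nonneg (hεpos n).le ((hYn n).2.1 u hu.1).le
    linarith
  exact ⟨⟨hYnn t ht, hYlim t ht⟩, ⟨hLnn, hLten⟩, by rw [hLdef]; ring⟩
end

section
/- Local constancy of the limit where the approximations stay uniformly positive: let y₀, b, σ > 0, let B : [0,∞) → ℝ be continuous with B(0) = 0, let (εₙ)ₙ be a strictly decreasing sequence of positive reals with εₙ → 0, and for each n let Yₙ : [0,∞) → ℝ be continuous, strictly positive, and solve E(εₙ). Define L(t) := limₙ (1/2)·∫₀ᵗ εₙ/Yₙ(s) ds. If 0 ≤ s ≤ t and there exists m > 0 such that Yₙ(u) ≥ m for all n and all u ∈ [s,t], then L(t) = L(s). -/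
/-- Local constancy of the limit correction function where the approximations
stay uniformly positive. -/
theorem stmt_7 (y₀ b σ : ℝ) (hy₀ : 0 < y₀) (hb : 0 < b) (hσ : 0 < σ)
    (B : ℝ → ℝ) (hBc : ContinuousOn B (Set.Ici 0)) (hB0 : B 0 = 0)
    (εs : ℕ → ℝ) (hεpos : ∀ n, 0 < εs n) (hεdec : StrictAnti εs)
    (hεlim : Filter.Tendsto εs Filter.atTop (nhds 0))
    (Yn : ℕ → ℝ → ℝ) (hYn : ∀ n, SolvesE y₀ b σ B (εs n) (Yn n))
    (L : ℝ → ℝ)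
    (hL : ∀ t, 0 ≤ t → Filter.Tendsto
      (fun n => (1 / 2) * ∫ s in (0:ℝ)..t, εs n / Yn n s) Filter.atTop (nhds (L t)))
    (s t : ℝ) (hs : 0 ≤ s) (hst : s ≤ t)
    (m : ℝ) (hm : 0 < m) (hbound : ∀ n, ∀ u ∈ Set.Icc s t, m ≤ Yn n u) :
    L t = L s := by
  have ht : (0:ℝ) ≤ t := le_trans hs hst
  -- continuity of integrand on [0, t]
  have hcont : ∀ n, ContinuousOn (fun u => εs n / Yn n u) (Set.Icc 0 t) := by
    intro n
    have hYc := (hYn n).1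
    have hYpos := (hYn n).2.1
    exact ContinuousOn.div continuousOn_const
      (hYc.mono (Set.Icc_subset_Ici_self))
      (fun u hu => (hYpos u hu.1).ne')
  have hint1 : ∀ n, IntervalIntegrable (fun u => εs n / Yn n u)
      MeasureTheory.volume 0 s := fun n =>
    ((hcont n).mono (Set.Icc_subset_Icc le_rfl hst)).intervalIntegrable_of_Icc hs
  have hint2 : ∀ n, IntervalIntegrable (fun u => εs n / Yn n u)
      MeasureTheory.volume s t := fun n =>
    ((hcont n).mono (Set.Icc_subset_Icc hs le_rfl)).intervalIntegrable_of_Icc hst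
  -- the difference is the integral over [s,t]
  have hdiff : ∀ n, (1 / 2) * (∫ u in (0:ℝ)..t, εs n / Yn n u)
      - (1 / 2) * (∫ u in (0:ℝ)..s, εs n / Yn n u)
      = (1 / 2) * ∫ u in s..t, εs n / Yn n u := by
    intro n
    rw [← mul_sub]
    congr 1
    rw [← intervalIntegral.integral_add_adjacent_intervals (hint1 n) (hint2 n)]
    ring
  -- bound the integral over [s,t]
  have hle : ∀ n, (1 / 2) * (∫ u in s..t, εs n / Yn n u) ≤ εs n / (2 * m) * (t - s) := by
    intro n
    have h1 : (∫ u in s..t, εs n / Yn n u) ≤ ∫ u in s..t, εs n / m := by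
      apply intervalIntegral.integral_mono_on hst (hint2 n) (intervalIntegrable_const)
      intro u hu
      exact div_le_div_of_nonneg_left (hεpos n).le hm (hbound n u hu)
    have h2 : (∫ u in s..t, εs n / m) = εs n / m * (t - s) := by
      rw [intervalIntegral.integral_const, smul_eq_mul]; ring
    calc (1 / 2) * (∫ u in s..t, εs n / Yn n u) ≤ (1 / 2) * (εs n / m * (t - s)) := by
          rw [h2] at h1; linarith [h1]
      _ = εs n / (2 * m) * (t - s) := by ring
  have hge : ∀ n, 0 ≤ (1 / 2) * (∫ u in s..t, εs n / Yn n u) := by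
    intro n
    have : 0 ≤ ∫ u in s..t, εs n / Yn n u := by
      apply intervalIntegral.integral_nonneg hst
      intro u hu
      exact div_nonneg (hεpos n).le (le_trans hm.le (hbound n u hu))
    linarith
  -- the difference tends to 0
  have hlim0 : Filter.Tendsto (fun n => (1 / 2) * ∫ u in s..t, εs n / Yn n u)
      Filter.atTop (nhds 0) := by
    have hub : Filter.Tendsto (fun n => εs n / (2 * m) * (t - s)) Filter.atTop (nhds 0) := by
      have := (hεlim.div_const (2 * m)).mul_const (t - s)
      simpa using this
    exact squeeze_zero (fun n => hge n) (fun n => hle n) hub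
  -- the difference also tends to L t - L s
  have hlimD : Filter.Tendsto (fun n => (1 / 2) * ∫ u in s..t, εs n / Yn n u)
      Filter.atTop (nhds (L t - L s)) := by
    have := (hL t ht).sub (hL s hs)
    refine this.congr fun n => hdiff n
  have := tendsto_nhds_unique hlimD hlim0
  linarith
end

section
/- Initial flatness of the limit reflection function: let y₀, b, σ > 0, let B : [0,∞) → ℝ be continuous with B(0) = 0, let (εₙ)ₙ be a strictly decreasing sequence of positive reals with εₙ → 0, and for each n let Yₙ : [0,∞) → ℝ be continuous, strictly positive, and solve E(εₙ). Suppose in addition that there exists a continuous U : [0,∞) → ℝ with U(t) = y₀ − (b/2)·∫₀ᵗ U(s) ds + (σ/2)·B(t) for all t ≥ 0. Then there exists t₀ > 0 such that L(t) = 0 for all t ∈ [0,t₀], where L(t) := limₙ (1/2)·∫₀ᵗ εₙ/Yₙ(s) ds. -/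
open MeasureTheory intervalIntegral Set Filter

/-- Initial flatness of the limit reflection function: near `t = 0` the limit of the
correction integrals vanishes. -/
theorem stmt_8 (y₀ b σ : ℝ) (hy₀ : 0 < y₀) (hb : 0 < b) (hσ : 0 < σ)
    (B : ℝ → ℝ) (hBc : ContinuousOn B (Set.Ici 0)) (hB0 : B 0 = 0)
    (εs : ℕ → ℝ) (hεpos : ∀ n, 0 < εs n) (hεdec : StrictAnti εs)
    (hεlim : Filter.Tendsto εs Filter.atTop (nhds 0))
    (Yn : ℕ → ℝ → ℝ) (hYn : ∀ n, SolvesE y₀ b σ B (εs n) (Yn n))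
    (U : ℝ → ℝ) (hUc : ContinuousOn U (Set.Ici 0))
    (hU : ∀ t, 0 ≤ t →
      U t = y₀ - (b / 2) * (∫ s in (0:ℝ)..t, U s) + (σ / 2) * B t)
    (L : ℝ → ℝ)
    (hL : ∀ t, 0 ≤ t → Filter.Tendsto
      (fun n => (1 / 2) * ∫ s in (0:ℝ)..t, εs n / Yn n s) Filter.atTop (nhds (L t))) :
    ∃ t₀ > (0:ℝ), ∀ t ∈ Set.Icc (0:ℝ) t₀, L t = 0 := by
  obtain hYc := fun n => (hYn n).1
  obtain hYpos := fun n => (hYn n).2.1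
  obtain hYeq := fun n => (hYn n).2.2
  -- continuity of the reciprocal integrand
  have hRc : ∀ n, ContinuousOn (fun s => εs n / Yn n s) (Set.Ici 0) := by
    intro n
    exact continuousOn_const.div (hYc n) (fun s hs => (hYpos n s hs).ne')
  -- integrability on subintervals of [0, ∞)
  have hint : ∀ (f : ℝ → ℝ), ContinuousOn f (Set.Ici 0) → ∀ a c : ℝ, 0 ≤ a → 0 ≤ c →
      IntervalIntegrable f volume a c := by
    intro f hf a c ha hc
    apply ContinuousOn.intervalIntegrable
    apply hf.mono
    intro x hx
    exact le_trans (le_inf ha hc) hx.1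
  -- rewritten equation for Yn
  have hYeq' : ∀ n t, 0 ≤ t →
      Yn n t = y₀ + (1 / 2) * (∫ s in (0:ℝ)..t, εs n / Yn n s)
        - (b / 2) * (∫ s in (0:ℝ)..t, Yn n s) + (σ / 2) * B t := by
    intro n t ht
    have h1 : IntervalIntegrable (fun s => εs n / Yn n s) volume 0 t :=
      hint _ (hRc n) 0 t le_rfl ht
    have h2 : IntervalIntegrable (fun s => b * Yn n s) volume 0 t :=
      hint _ (continuousOn_const.mul (hYc n)) 0 t le_rfl ht
    have heq := hYeq n t ht
    rw [intervalIntegral.integral_sub h1 h2, intervalIntegral.integral_const_mul] at heq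
    rw [heq]; ring
  -- value at 0
  have hY0 : ∀ n, Yn n 0 = y₀ := by
    intro n
    have := hYeq n 0 le_rfl
    simpa [hB0] using this
  have hU0 : U 0 = y₀ := by simpa [hB0] using hU 0 le_rfl
  -- positivity of correction integrals
  have hFnn : ∀ n a c, 0 ≤ a → a ≤ c → 0 ≤ ∫ s in a..c, εs n / Yn n s := by
    intro n a c ha hac
    apply intervalIntegral.integral_nonneg hac
    intro u hu
    exact le_of_lt (div_pos (hεpos n) (hYpos n u (le_trans ha hu.1)))
  -- comparison: U ≤ Yn n on [0, ∞)
  have hcomp : ∀ n t, 0 ≤ t → U t ≤ Yn n t := by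
    intro n t ht
    by_contra hlt
    push_neg at hlt
    have hDc : ContinuousOn (fun s => Yn n s - U s) (Set.Ici 0) := (hYc n).sub hUc
    have hDeq : ∀ s, 0 ≤ s → Yn n s - U s
        = (1 / 2) * (∫ u in (0:ℝ)..s, εs n / Yn n u)
          - (b / 2) * (∫ u in (0:ℝ)..s, (Yn n u - U u)) := by
      intro s hs
      have hiY : IntervalIntegrable (Yn n) volume 0 s := hint _ (hYc n) 0 s le_rfl hs
      have hiU : IntervalIntegrable U volume 0 s := hint _ hUc 0 s le_rfl hs
      have hsub : (∫ u in (0:ℝ)..s, (Yn n u - U u))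
          = (∫ u in (0:ℝ)..s, Yn n u) - ∫ u in (0:ℝ)..s, U u :=
        intervalIntegral.integral_sub hiY hiU
      rw [hsub, hYeq' n s hs, hU s hs]
      ring
    have hDt : Yn n t - U t < 0 := sub_neg.mpr hlt
    have hD0 : Yn n 0 - U 0 = 0 := by rw [hY0, hU0]; ring
    set S : Set ℝ := {s | s ∈ Set.Icc 0 t ∧ 0 ≤ Yn n s - U s} with hS
    have hSne : S.Nonempty := ⟨0, ⟨le_rfl, ht⟩, hD0.ge⟩
    have hSbdd : BddAbove S := ⟨t, fun s hs => hs.1.2⟩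
    have hSclosed : IsClosed S := by
      have h1 : ContinuousOn (fun s => Yn n s - U s) (Set.Icc 0 t) :=
        hDc.mono Set.Icc_subset_Ici_self
      have h2 := h1.preimage_isClosed_of_isClosed isClosed_Icc (isClosed_Ici (a := (0:ℝ)))
      have hSeq : S = Set.Icc 0 t ∩ (fun s => Yn n s - U s) ⁻¹' Set.Ici 0 := by
        ext s; simp [hS]
      rw [hSeq]; exact h2
    obtain ⟨t₁, ht₁S, ht₁sup⟩ : ∃ t₁, t₁ ∈ S ∧ ∀ s ∈ S, s ≤ t₁ :=
      ⟨sSup S, hSclosed.csSup_mem hSne hSbdd, fun s hs => le_csSup hSbdd hs⟩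
    have ht₁0 : 0 ≤ t₁ := ht₁S.1.1
    have ht₁t : t₁ ≤ t := ht₁S.1.2
    have hDt₁ : 0 ≤ Yn n t₁ - U t₁ := ht₁S.2
    have ht₁lt : t₁ < t := lt_of_le_of_ne ht₁t (by
      rintro rfl; exact absurd hDt₁ (not_le.mpr hDt))
    have hDneg : ∀ s ∈ Set.Ioc t₁ t, Yn n s - U s < 0 := by
      intro s hs
      by_contra hge
      push_neg at hge
      have : s ∈ S := ⟨⟨le_trans ht₁0 hs.1.le, hs.2⟩, hge⟩
      exact absurd (ht₁sup s this) (not_le.mpr hs.1)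
    -- D t₁ = 0 by right continuity
    have hDt₁0 : Yn n t₁ - U t₁ = 0 := by
      refine le_antisymm ?_ hDt₁
      have htend : Filter.Tendsto (fun s => Yn n s - U s) (nhdsWithin t₁ (Set.Ioi t₁))
          (nhds (Yn n t₁ - U t₁)) :=
        (hDc t₁ ht₁0).tendsto.mono_left
          (nhdsWithin_mono _ (fun x hx => le_trans ht₁0 (le_of_lt hx)))
      have hev : ∀ᶠ s in nhdsWithin t₁ (Set.Ioi t₁), Yn n s - U s ≤ 0 := by
        filter_upwards [Ioc_mem_nhdsGT_of_mem ⟨le_rfl, ht₁lt⟩] with s hs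
        exact (hDneg s hs).le
      exact le_of_tendsto htend hev
    have hDle : ∀ s ∈ Set.Icc t₁ t, Yn n s - U s ≤ 0 := by
      intro s hs
      rcases eq_or_lt_of_le hs.1 with rfl | h
      · exact hDt₁0.le
      · exact (hDneg s ⟨h, hs.2⟩).le
    -- integral identities between t₁ and t
    have hiD : ∀ a c : ℝ, 0 ≤ a → 0 ≤ c →
        IntervalIntegrable (fun u => Yn n u - U u) volume a c := hint _ hDc
    have hadd : (∫ u in (0:ℝ)..t₁, (Yn n u - U u)) + (∫ u in t₁..t, (Yn n u - U u))
        = ∫ u in (0:ℝ)..t, (Yn n u - U u) :=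
      intervalIntegral.integral_add_adjacent_intervals (hiD 0 t₁ le_rfl ht₁0)
        (hiD t₁ t ht₁0 ht)
    have haddF : (∫ s in (0:ℝ)..t₁, εs n / Yn n s) + (∫ s in t₁..t, εs n / Yn n s)
        = ∫ s in (0:ℝ)..t, εs n / Yn n s :=
      intervalIntegral.integral_add_adjacent_intervals
        (hint _ (hRc n) 0 t₁ le_rfl ht₁0) (hint _ (hRc n) t₁ t ht₁0 ht)
    have hIneg : (∫ u in t₁..t, (Yn n u - U u)) ≤ 0 := by
      have h := intervalIntegral.integral_nonneg (μ := volume) (f := fun u => -(Yn n u - U u)) ht₁lt.le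
        (fun u hu => neg_nonneg.mpr (hDle u hu))
      rw [intervalIntegral.integral_neg] at h
      linarith
    have hFmono : 0 ≤ ∫ s in t₁..t, εs n / Yn n s := hFnn n t₁ t ht₁0 ht₁lt.le
    have e1 := hDeq t ht
    have e2 := hDeq t₁ ht₁0
    have key : (Yn n t - U t) - (Yn n t₁ - U t₁)
        = (1 / 2) * (∫ s in t₁..t, εs n / Yn n s)
          - (b / 2) * (∫ u in t₁..t, (Yn n u - U u)) := by
      rw [e1, e2, ← hadd, ← haddF]; ring
    have hbJ : (b / 2) * (∫ u in t₁..t, (Yn n u - U u)) ≤ 0 :=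
      mul_nonpos_iff.mpr (Or.inl ⟨(by linarith), hIneg⟩)
    linarith
  -- choose t₀ with U ≥ y₀/2 on [0, t₀]
  have hUcont0 : ContinuousWithinAt U (Set.Ici 0) 0 := hUc 0 (Set.mem_Ici.mpr le_rfl)
  have hev : ∀ᶠ s in nhdsWithin 0 (Set.Ici 0), U s > y₀ / 2 := by
    have h : Set.Ioi (y₀ / 2) ∈ nhds (U 0) := by
      rw [hU0]; exact Ioi_mem_nhds (by linarith)
    exact hUcont0 h
  rw [Filter.eventually_iff, Metric.mem_nhdsWithin_iff] at hev
  obtain ⟨δ, hδpos, hδ⟩ := hev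
  refine ⟨δ / 2, by linarith, ?_⟩
  intro t htmem
  obtain ⟨ht0, htδ⟩ := htmem
  -- lower bound for Yn on [0, t]
  have hYlb : ∀ n s, s ∈ Set.Icc (0:ℝ) t → y₀ / 2 ≤ Yn n s := by
    intro n s hs
    have hUs : y₀ / 2 < U s := by
      apply hδ
      constructor
      · rw [Metric.mem_ball, Real.dist_eq, sub_zero, abs_of_nonneg hs.1]
        calc s ≤ t := hs.2
          _ ≤ δ / 2 := htδ
          _ < δ := by linarith
      · exact Set.mem_Ici.mpr hs.1
    exact le_trans hUs.le (hcomp n s hs.1)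
  -- bound the correction integral
  have hbound : ∀ n, (1 / 2) * (∫ s in (0:ℝ)..t, εs n / Yn n s) ≤ t * (εs n / y₀) := by
    intro n
    have h1 : (∫ s in (0:ℝ)..t, εs n / Yn n s) ≤ ∫ s in (0:ℝ)..t, εs n / (y₀ / 2) := by
      apply intervalIntegral.integral_mono_on ht0 (hint _ (hRc n) 0 t le_rfl ht0)
        (intervalIntegrable_const)
      intro s hs
      exact div_le_div_of_nonneg_left (hεpos n).le (by linarith) (hYlb n s hs)
    have h2 : (∫ s in (0:ℝ)..t, (εs n / (y₀ / 2) : ℝ)) = t * (εs n / (y₀ / 2)) := by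
      rw [intervalIntegral.integral_const, smul_eq_mul, sub_zero]
    rw [h2] at h1
    have h3 : εs n / (y₀ / 2) = 2 * (εs n / y₀) := by
      field_simp
    rw [h3] at h1
    nlinarith [mul_nonneg ht0 (div_nonneg (hεpos n).le hy₀.le)]
  -- squeeze to 0
  have htend0 : Filter.Tendsto (fun n => (1 / 2) * ∫ s in (0:ℝ)..t, εs n / Yn n s)
      Filter.atTop (nhds 0) := by
    have hub : Filter.Tendsto (fun n => t * (εs n / y₀)) Filter.atTop (nhds 0) := by
      have := (hεlim.div_const y₀).const_mul t
      simpa using this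
    apply squeeze_zero (fun n => ?_) hbound hub
    exact mul_nonneg (by norm_num) (hFnn n 0 t le_rfl ht0)
  exact tendsto_nhds_unique (hL t ht0) htend0
end

section
/- Continuity of the limit: let y₀, b, σ > 0, and let B : [0,∞) → ℝ be continuous with B(0) = 0 and locally Hölder continuous, i.e. there exists λ ∈ (0,1) such that for every T > 0 there is a constant Λ_T ≥ 0 with |B(t) − B(s)| ≤ Λ_T·|t − s|^λ for all s, t ∈ [0,T]. Let (εₙ)ₙ be a strictly decreasing sequence of positive reals with εₙ → 0, and for each n let Yₙ : [0,∞) → ℝ be continuous, strictly positive, and solve E(εₙ). Then the pointwise limits Y(t) := limₙ Yₙ(t) and L(t) := limₙ (1/2)·∫₀ᵗ εₙ/Yₙ(s) ds are continuous functions on [0,∞). -/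
open MeasureTheory Set Filter intervalIntegral

namespace SolvesE

variable {y₀ b σ ε ε₁ ε₂ : ℝ} {B Y Y₁ Y₂ : ℝ → ℝ}

lemma contOn_f (h : SolvesE y₀ b σ B ε Y) {u t : ℝ} (hu : 0 ≤ u) :
    ContinuousOn (fun s => ε / Y s - b * Y s) (Icc u t) := by
  have hsub : Icc u t ⊆ Ici 0 := fun x hx => le_trans hu hx.1
  exact (continuousOn_const.div (h.1.mono hsub)
    (fun x hx => (h.2.1 x (hsub hx)).ne')).sub (continuousOn_const.mul (h.1.mono hsub))

lemma intInt_f (h : SolvesE y₀ b σ B ε Y) {u t : ℝ} (hu : 0 ≤ u) (hut : u ≤ t) :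
    IntervalIntegrable (fun s => ε / Y s - b * Y s) volume u t := by
  apply ContinuousOn.intervalIntegrable
  rw [Set.uIcc_of_le hut]
  exact h.contOn_f hu

lemma intInt_Y (h : SolvesE y₀ b σ B ε Y) {u t : ℝ} (hu : 0 ≤ u) (hut : u ≤ t) :
    IntervalIntegrable Y volume u t := by
  apply ContinuousOn.intervalIntegrable
  rw [Set.uIcc_of_le hut]
  exact h.1.mono (fun x hx => le_trans hu hx.1)

lemma intInt_inv (h : SolvesE y₀ b σ B ε Y) {u t : ℝ} (hu : 0 ≤ u) (hut : u ≤ t) :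
    IntervalIntegrable (fun s => ε / Y s) volume u t := by
  apply ContinuousOn.intervalIntegrable
  rw [Set.uIcc_of_le hut]
  have hsub : Icc u t ⊆ Ici 0 := fun x hx => le_trans hu hx.1
  exact continuousOn_const.div (h.1.mono hsub) (fun x hx => (h.2.1 x (hsub hx)).ne')

lemma at_zero (h : SolvesE y₀ b σ B ε Y) (hB0 : B 0 = 0) : Y 0 = y₀ := by
  have := h.2.2 0 le_rfl
  simpa [hB0] using this

lemma increment (h : SolvesE y₀ b σ B ε Y) {u t : ℝ} (hu : 0 ≤ u) (hut : u ≤ t) :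
    Y t = Y u + (1 / 2) * (∫ s in u..t, (ε / Y s - b * Y s)) + (σ / 2) * (B t - B u) := by
  have h1 := h.2.2 t (le_trans hu hut)
  have h2 := h.2.2 u hu
  have h3 := intervalIntegral.integral_interval_sub_left
    (h.intInt_f le_rfl (le_trans hu hut)) (h.intInt_f le_rfl hu)
  rw [h1, h2]; rw [← h3]; ring

lemma comparison (h₁ : SolvesE y₀ b σ B ε₁ Y₁) (h₂ : SolvesE y₀ b σ B ε₂ Y₂)
    (hB0 : B 0 = 0) (hb : 0 < b) (hε₁ : 0 < ε₁) (hε : ε₂ < ε₁) :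
    ∀ t, 0 ≤ t → Y₂ t ≤ Y₁ t := by
  intro t₀ ht₀
  by_contra hcon
  push_neg at hcon
  set D : ℝ → ℝ := fun s => Y₁ s - Y₂ s with hD
  have hDt₀ : D t₀ < 0 := sub_neg.mpr hcon
  set g : ℝ → ℝ := fun s => (ε₁ / Y₁ s - b * Y₁ s) - (ε₂ / Y₂ s - b * Y₂ s) with hg
  have hgint : ∀ u t : ℝ, 0 ≤ u → u ≤ t → IntervalIntegrable g volume u t :=
    fun u t hu hut => (h₁.intInt_f hu hut).sub (h₂.intInt_f hu hut)
  have hDeq : ∀ t, 0 ≤ t → D t = (1/2) * ∫ s in (0:ℝ)..t, g s := by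
    intro t ht
    have e1 := h₁.2.2 t ht
    have e2 := h₂.2.2 t ht
    have e3 : (∫ s in (0:ℝ)..t, g s)
        = (∫ s in (0:ℝ)..t, (ε₁ / Y₁ s - b * Y₁ s))
          - ∫ s in (0:ℝ)..t, (ε₂ / Y₂ s - b * Y₂ s) :=
      intervalIntegral.integral_sub (h₁.intInt_f le_rfl ht) (h₂.intInt_f le_rfl ht)
    simp only [hD]; rw [e1, e2, e3]; ring
  have hD0 : D 0 = 0 := by
    simp [hD, h₁.at_zero hB0, h₂.at_zero hB0]
  have ht₀pos : 0 < t₀ := by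
    rcases lt_or_eq_of_le ht₀ with h | h
    · exact h
    · exfalso; rw [← h] at hDt₀; rw [hD0] at hDt₀; exact lt_irrefl 0 hDt₀
  have hDcont : ContinuousOn D (Icc 0 t₀) := by
    have hsub : Icc (0:ℝ) t₀ ⊆ Ici 0 := fun x hx => hx.1
    exact (h₁.1.mono hsub).sub (h₂.1.mono hsub)
  set S : Set ℝ := Icc 0 t₀ ∩ D ⁻¹' {0} with hS
  have hSclosed : IsClosed S := hDcont.preimage_isClosed_of_isClosed isClosed_Icc isClosed_singleton
  have hScomp : IsCompact S := isCompact_Icc.of_isClosed_subset hSclosed inter_subset_left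
  have hSne : S.Nonempty := ⟨0, ⟨le_rfl, ht₀⟩, by simpa using hD0⟩
  set τ := sSup S with hτ
  have hτS : τ ∈ S := hScomp.sSup_mem hSne
  have hτ0 : 0 ≤ τ := hτS.1.1
  have hτt : τ ≤ t₀ := hτS.1.2
  have hDτ : D τ = 0 := hτS.2
  have hτlt : τ < t₀ := lt_of_le_of_ne hτt (fun h => by rw [h] at hDτ; linarith)
  have hne : ∀ s ∈ Ioc τ t₀, D s ≠ 0 := by
    intro s hs h0
    have : s ∈ S := ⟨⟨hτ0.trans hs.1.le, hs.2⟩, h0⟩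
    exact absurd (le_csSup hScomp.bddAbove this) (not_le.mpr hs.1)
  have hneg : ∀ s ∈ Ioc τ t₀, D s < 0 := by
    intro s hs
    rcases lt_trichotomy (D s) 0 with h | h | h
    · exact h
    · exact absurd h (hne s hs)
    · exfalso
      have hst : s ≤ t₀ := hs.2
      have hcont' : ContinuousOn D (Icc s t₀) :=
        hDcont.mono (Icc_subset_Icc (hτ0.trans hs.1.le) le_rfl)
      have := intermediate_value_Ioo' hst hcont' (show (0:ℝ) ∈ Ioo (D t₀) (D s) from ⟨hDt₀, h⟩)
      obtain ⟨z, hz, hz0⟩ := this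
      exact hne z ⟨hs.1.trans hz.1, hz.2.le⟩ hz0
  have hgpos : ∀ s ∈ Ioo τ t₀, 0 < g s := by
    intro s hs
    have hs0 : (0:ℝ) ≤ s := hτ0.trans hs.1.le
    have h1p : 0 < Y₁ s := h₁.2.1 s hs0
    have h2p : 0 < Y₂ s := h₂.2.1 s hs0
    have hlt : Y₁ s < Y₂ s := by have := hneg s ⟨hs.1, hs.2.le⟩; simp only [hD] at this; linarith
    have d1 : ε₁ / Y₂ s < ε₁ / Y₁ s := div_lt_div_of_pos_left hε₁ h1p hlt
    have d2 : ε₂ / Y₂ s ≤ ε₁ / Y₂ s := by gcongr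
    simp only [hg]
    nlinarith [mul_pos hb (sub_pos.mpr hlt)]
  have hsplit : D t₀ = D τ + (1/2) * ∫ s in τ..t₀, g s := by
    rw [hDeq t₀ ht₀, hDeq τ hτ0,
      ← intervalIntegral.integral_interval_sub_left (hgint 0 t₀ le_rfl ht₀) (hgint 0 τ le_rfl hτ0)]
    ring
  have hpos : 0 < ∫ s in τ..t₀, g s :=
    intervalIntegral_pos_of_pos_on (hgint τ t₀ hτ0 hτt) hgpos hτlt
  rw [hsplit, hDτ] at hDt₀
  linarith

lemma upper_bound (h : SolvesE y₀ b σ B ε Y) (hb : 0 < b) (hσ : 0 < σ) (hε : 0 < ε)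
    {u t w : ℝ} (hu : 0 ≤ u) (hut : u ≤ t)
    (hw : ∀ p ∈ Icc u t, ∀ q ∈ Icc u t, σ / 2 * |B p - B q| ≤ w) :
    Y t ≤ max (Y u) (Real.sqrt ε) + Real.sqrt ε / 2 * (t - u) + w := by
  set a := max (Y u) (Real.sqrt ε) with ha
  have hw0 : 0 ≤ w := by
    have := hw u ⟨le_rfl, hut⟩ u ⟨le_rfl, hut⟩
    simpa using this
  have hsq : 0 < Real.sqrt ε := Real.sqrt_pos.mpr hε
  have hapos : 0 < a := lt_of_lt_of_le hsq (le_max_right _ _)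
  rcases le_or_gt (Y t) a with hYa | hYa
  · have : 0 ≤ Real.sqrt ε / 2 * (t - u) := mul_nonneg (by positivity) (by linarith)
    linarith
  · have hYcont : ContinuousOn Y (Icc u t) := h.1.mono (fun x hx => le_trans hu hx.1)
    set S : Set ℝ := Icc u t ∩ Y ⁻¹' (Iic a) with hS
    have hSclosed : IsClosed S := hYcont.preimage_isClosed_of_isClosed isClosed_Icc isClosed_Iic
    have hScomp : IsCompact S := isCompact_Icc.of_isClosed_subset hSclosed inter_subset_left
    have hSne : S.Nonempty :=
      ⟨u, ⟨le_rfl, hut⟩, by simp only [Set.mem_preimage, Set.mem_Iic, ha]; exact le_max_left _ _⟩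
    set τ := sSup S with hτ
    have hτS : τ ∈ S := hScomp.sSup_mem hSne
    have hτu : u ≤ τ := hτS.1.1
    have hτt : τ ≤ t := hτS.1.2
    have hYτ : Y τ ≤ a := hτS.2
    have hτ0 : 0 ≤ τ := hu.trans hτu
    have hτlt : τ < t := lt_of_le_of_ne hτt (fun hh => by rw [hh] at hYτ; linarith)
    have hgt : ∀ s ∈ Ioc τ t, a < Y s := by
      intro s hs
      by_contra hcon
      push_neg at hcon
      have : s ∈ S := ⟨⟨hτu.trans hs.1.le, hs.2⟩, hcon⟩
      exact absurd (le_csSup hScomp.bddAbove this) (not_le.mpr hs.1)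
    have hint1 : IntervalIntegrable (fun s => ε / Y s - b * Y s) volume τ t := h.intInt_f hτ0 hτt
    have hmono : (∫ s in τ..t, (ε / Y s - b * Y s)) ≤ ∫ s in τ..t, (ε / a) := by
      rw [intervalIntegral.integral_of_le hτt, intervalIntegral.integral_of_le hτt]
      apply setIntegral_mono_on hint1.1 (_root_.intervalIntegrable_const (c := ε / a)).1
        measurableSet_Ioc
      intro x hx
      have hax : a < Y x := hgt x hx
      have hYx : 0 < Y x := hapos.trans hax
      have h1 : ε / Y x ≤ ε / a := div_le_div_of_nonneg_left hε.le hapos hax.le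
      nlinarith [mul_pos hb hYx]
    have hconstint : (∫ s in τ..t, (ε / a)) = (t - τ) * (ε / a) := by
      simp [intervalIntegral.integral_const, smul_eq_mul]; ring
    have hεa : ε / a ≤ Real.sqrt ε := by
      calc ε / a ≤ ε / Real.sqrt ε := div_le_div_of_nonneg_left hε.le hsq (le_max_right _ _)
      _ = Real.sqrt ε := Real.div_sqrt
    have hB : σ / 2 * (B t - B τ) ≤ w := by
      have h1 : σ / 2 * (B t - B τ) ≤ σ / 2 * |B t - B τ| :=
        mul_le_mul_of_nonneg_left (le_abs_self _) (by positivity)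
      exact h1.trans (hw t ⟨hut, le_rfl⟩ τ ⟨hτu, hτt⟩)
    have hinc := h.increment hτ0 hτt
    have hend : (t - τ) * (ε / a) ≤ (t - u) * Real.sqrt ε := by
      have h0 : 0 ≤ ε / a := by positivity
      have := mul_le_mul (by linarith : t - τ ≤ t - u) hεa h0 (by linarith : (0:ℝ) ≤ t - u)
      linarith
    rw [hinc]
    have : (1:ℝ)/2 * (∫ s in τ..t, (ε / Y s - b * Y s)) ≤ 1/2 * ((t-u) * Real.sqrt ε) := by
      have := hmono.trans (hconstint ▸ hend)
      linarith
    nlinarith [this, hB, hYτ]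

lemma lower_bound (h : SolvesE y₀ b σ B ε Y) (hb : 0 < b) (hσ : 0 < σ) (hε : 0 < ε)
    {u t w M : ℝ} (hu : 0 ≤ u) (hut : u ≤ t)
    (hw : ∀ p ∈ Icc u t, ∀ q ∈ Icc u t, σ / 2 * |B p - B q| ≤ w)
    (hM : ∀ s ∈ Icc u t, Y s ≤ M) :
    Y u - b / 2 * (t - u) * M - w ≤ Y t := by
  have hinc := h.increment hu hut
  have hint1 : IntervalIntegrable (fun s => ε / Y s - b * Y s) volume u t := h.intInt_f hu hut
  have hmono : (∫ s in u..t, (-(b) * M)) ≤ ∫ s in u..t, (ε / Y s - b * Y s) := by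
    rw [intervalIntegral.integral_of_le hut, intervalIntegral.integral_of_le hut]
    apply setIntegral_mono_on (_root_.intervalIntegrable_const (c := -(b) * M)).1 hint1.1
      measurableSet_Ioc
    intro x hx
    have hx0 : 0 ≤ x := hu.trans hx.1.le
    have hYx : 0 < Y x := h.2.1 x hx0
    have hMx : Y x ≤ M := hM x ⟨hx.1.le, hx.2⟩
    have : 0 < ε / Y x := by positivity
    nlinarith [mul_le_mul_of_nonneg_left hMx hb.le]
  have hconst : (∫ s in u..t, (-(b) * M)) = (t - u) * (-(b) * M) := by
    simp [intervalIntegral.integral_const, smul_eq_mul]; ring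
  have hB : -w ≤ σ / 2 * (B t - B u) := by
    have h1 : σ / 2 * |B t - B u| ≤ w := hw t ⟨hut, le_rfl⟩ u ⟨le_rfl, hut⟩
    have h2 : -(σ / 2 * (B t - B u)) ≤ σ / 2 * |B t - B u| := by
      rw [← mul_neg]
      exact mul_le_mul_of_nonneg_left (neg_le_abs _) (by positivity)
    linarith
  rw [hinc]
  rw [hconst] at hmono
  nlinarith [hmono, hB]

end SolvesE

/-- Continuity of the pointwise limits `Y` and `L` when the driving path is
locally Hölder continuous. -/
theorem stmt_10 (y₀ b σ : ℝ) (hy₀ : 0 < y₀) (hb : 0 < b) (hσ : 0 < σ)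
    (B : ℝ → ℝ) (hBc : ContinuousOn B (Set.Ici 0)) (hB0 : B 0 = 0)
    (hHol : ∃ lam : ℝ, 0 < lam ∧ lam < 1 ∧ ∀ T, 0 < T → ∃ Λ, 0 ≤ Λ ∧
      ∀ s ∈ Set.Icc (0:ℝ) T, ∀ t ∈ Set.Icc (0:ℝ) T, |B t - B s| ≤ Λ * |t - s| ^ lam)
    (εs : ℕ → ℝ) (hεpos : ∀ n, 0 < εs n) (hεdec : StrictAnti εs)
    (hεlim : Filter.Tendsto εs Filter.atTop (nhds 0))
    (Yn : ℕ → ℝ → ℝ) (hYn : ∀ n, SolvesE y₀ b σ B (εs n) (Yn n)) :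
    ∃ Y L : ℝ → ℝ,
      (∀ t, 0 ≤ t → Filter.Tendsto (fun n => Yn n t) Filter.atTop (nhds (Y t))) ∧
      (∀ t, 0 ≤ t → Filter.Tendsto
        (fun n => (1 / 2) * ∫ s in (0:ℝ)..t, εs n / Yn n s) Filter.atTop (nhds (L t))) ∧
      ContinuousOn Y (Set.Ici 0) ∧ ContinuousOn L (Set.Ici 0) := by
  classical
  -- comparison: the family is pointwise antitone in `n`
  have haux : ∀ t, 0 ≤ t → ∀ m n : ℕ, m ≤ n → Yn n t ≤ Yn m t := by
    intro t ht m n hmn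
    rcases lt_or_eq_of_le hmn with h | h
    · exact SolvesE.comparison (hYn m) (hYn n) hB0 hb (hεpos m) (hεdec h) t ht
    · rw [h]
  set Y : ℝ → ℝ := fun t => ⨅ n, Yn n t with hYdef
  have hbdd : ∀ t, 0 ≤ t → BddBelow (Set.range fun n => Yn n t) := by
    intro t ht
    exact ⟨0, by rintro x ⟨n, rfl⟩; exact ((hYn n).2.1 t ht).le⟩
  have htendY : ∀ t, 0 ≤ t → Filter.Tendsto (fun n => Yn n t) Filter.atTop (nhds (Y t)) := by
    intro t ht
    exact tendsto_atTop_ciInf (fun m n hmn => haux t ht m n hmn) (hbdd t ht)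
  have hY0 : ∀ t, 0 ≤ t → 0 ≤ Y t := by
    intro t ht
    exact le_ciInf fun n => ((hYn n).2.1 t ht).le
  have hYle : ∀ t, 0 ≤ t → ∀ n, Y t ≤ Yn n t := by
    intro t ht n
    exact ciInf_le (hbdd t ht) n
  have hsqrt : Filter.Tendsto (fun n => Real.sqrt (εs n)) Filter.atTop (nhds 0) := by
    have h1 : Filter.Tendsto (fun n => Real.sqrt (εs n)) Filter.atTop (nhds (Real.sqrt 0)) :=
      (Real.continuous_sqrt.tendsto 0).comp hεlim
    simpa using h1
  -- limiting upper bound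
  have hup : ∀ u t w : ℝ, 0 ≤ u → u ≤ t →
      (∀ p ∈ Set.Icc u t, ∀ q ∈ Set.Icc u t, σ / 2 * |B p - B q| ≤ w) →
      Y t ≤ Y u + w := by
    intro u t w hu hut hw
    have hle : ∀ n, Yn n t ≤ max (Yn n u) (Real.sqrt (εs n)) + Real.sqrt (εs n) / 2 * (t - u) + w :=
      fun n => (hYn n).upper_bound hb hσ (hεpos n) hu hut hw
    have h2 : Filter.Tendsto
        (fun n => max (Yn n u) (Real.sqrt (εs n)) + Real.sqrt (εs n) / 2 * (t - u) + w)
        Filter.atTop (nhds (max (Y u) 0 + 0 / 2 * (t - u) + w)) :=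
      (((htendY u hu).max hsqrt).add ((hsqrt.div_const 2).mul_const (t - u))).add
        tendsto_const_nhds
    have h3 := le_of_tendsto_of_tendsto' (htendY t (hu.trans hut)) h2 hle
    rw [max_eq_left (hY0 u hu)] at h3
    linarith
  -- limiting lower bound
  have hlow : ∀ u t w M : ℝ, 0 ≤ u → u ≤ t →
      (∀ p ∈ Set.Icc u t, ∀ q ∈ Set.Icc u t, σ / 2 * |B p - B q| ≤ w) →
      (∀ s ∈ Set.Icc u t, Yn 0 s ≤ M) →
      Y u - b / 2 * (t - u) * M - w ≤ Y t := by
    intro u t w M hu hut hw hM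
    have hle : ∀ n, Yn n u - b / 2 * (t - u) * M - w ≤ Yn n t := by
      intro n
      exact (hYn n).lower_bound hb hσ (hεpos n) hu hut hw
        (fun s hs => (haux s (hu.trans hs.1) 0 n (Nat.zero_le n)).trans (hM s hs))
    have h2 : Filter.Tendsto (fun n => Yn n u - b / 2 * (t - u) * M - w)
        Filter.atTop (nhds (Y u - b / 2 * (t - u) * M - w)) :=
      ((htendY u hu).sub tendsto_const_nhds).sub tendsto_const_nhds
    exact le_of_tendsto_of_tendsto' h2 (htendY t (hu.trans hut)) hle
  -- continuity of Y
  have hYcont : ContinuousOn Y (Set.Ici 0) := by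
    intro t₀ ht₀
    have hT : (0:ℝ) ≤ t₀ + 1 := by
      simp only [Set.mem_Ici] at ht₀; linarith
    set T := t₀ + 1 with hTdef
    simp only [Set.mem_Ici] at ht₀
    obtain ⟨M0, hM0⟩ := isCompact_Icc.exists_bound_of_continuousOn
      ((hYn 0).1.mono (fun x hx => hx.1) : ContinuousOn (Yn 0) (Set.Icc 0 T))
    set M := max M0 1 with hMdef
    have hMpos : 0 < M := lt_of_lt_of_le one_pos (le_max_right _ _)
    have hM : ∀ s ∈ Set.Icc (0:ℝ) T, Yn 0 s ≤ M :=
      fun s hs => ((le_abs_self _).trans (hM0 s hs)).trans (le_max_left _ _)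
    have hBuc : UniformContinuousOn B (Set.Icc 0 T) :=
      isCompact_Icc.uniformContinuousOn_of_continuous (hBc.mono (fun x hx => hx.1))
    rw [ContinuousWithinAt, Metric.tendsto_nhdsWithin_nhds]
    intro ε hε
    rw [Metric.uniformContinuousOn_iff] at hBuc
    obtain ⟨δ₁, hδ₁pos, hδ₁⟩ := hBuc (ε / (2 * σ)) (by positivity)
    set δ₂ := ε / (2 * b * M) with hδ₂def
    have hδ₂pos : 0 < δ₂ := by positivity
    refine ⟨min δ₁ (min 1 δ₂), by positivity, ?_⟩
    intro s hs hdist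
    simp only [Set.mem_Ici] at hs
    rw [Real.dist_eq] at hdist
    have hd1 : |s - t₀| < δ₁ := lt_of_lt_of_le hdist (min_le_left _ _)
    have hd2 : |s - t₀| < 1 := lt_of_lt_of_le hdist ((min_le_right _ _).trans (min_le_left _ _))
    have hd3 : |s - t₀| < δ₂ := lt_of_lt_of_le hdist ((min_le_right _ _).trans (min_le_right _ _))
    -- key two-sided estimate
    have key : ∀ u t : ℝ, 0 ≤ u → u ≤ t → t ≤ T → t - u < δ₁ → t - u < δ₂ →
        |Y t - Y u| < ε := by
      intro u t hu hut htT hduv1 hduv2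
      have hsub : Set.Icc u t ⊆ Set.Icc (0:ℝ) T :=
        Set.Icc_subset_Icc hu htT
      have hw : ∀ p ∈ Set.Icc u t, ∀ q ∈ Set.Icc u t, σ / 2 * |B p - B q| ≤ ε / 4 := by
        intro p hp q hq
        have hpq : dist p q < δ₁ := by
          rw [Real.dist_eq]
          have : |p - q| ≤ t - u := by
            rw [abs_sub_le_iff]
            constructor <;> · have := hp.1; have := hp.2; have := hq.1; have := hq.2; linarith
          linarith
        have := hδ₁ p (hsub hp) q (hsub hq) hpq
        rw [Real.dist_eq] at this
        have h2 : σ / 2 * |B p - B q| ≤ σ / 2 * (ε / (2 * σ)) := by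
          apply mul_le_mul_of_nonneg_left this.le (by positivity)
        have h3 : σ / 2 * (ε / (2 * σ)) = ε / 4 := by
          field_simp
          ring
        linarith
      have h1 : Y t ≤ Y u + ε / 4 := hup u t (ε / 4) hu hut hw
      have h2 : Y u - b / 2 * (t - u) * M - ε / 4 ≤ Y t :=
        hlow u t (ε / 4) M hu hut hw (fun x hx => hM x (hsub hx))
      have h3 : b / 2 * (t - u) * M < b / 2 * δ₂ * M := by
        have := mul_lt_mul_of_pos_right
          (mul_lt_mul_of_pos_left hduv2 (by positivity : (0:ℝ) < b / 2)) hMpos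
        linarith
      have h4 : b / 2 * δ₂ * M = ε / 4 := by
        rw [hδ₂def]; field_simp; ring
      rw [abs_sub_lt_iff]
      constructor <;> linarith
    rcases le_total s t₀ with hst | hst
    · have h1 : t₀ - s < δ₁ := by rw [abs_sub_comm, abs_of_nonneg (by linarith)] at hd1; linarith
      have h2 : t₀ - s < δ₂ := by rw [abs_sub_comm, abs_of_nonneg (by linarith)] at hd3; linarith
      have := key s t₀ hs hst (by rw [hTdef]; linarith) h1 h2
      rw [Real.dist_eq, abs_sub_comm]
      exact this
    · have h0 : s - t₀ < 1 := by rw [abs_of_nonneg (by linarith)] at hd2; linarith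
      have h1 : s - t₀ < δ₁ := by rw [abs_of_nonneg (by linarith)] at hd1; linarith
      have h2 : s - t₀ < δ₂ := by rw [abs_of_nonneg (by linarith)] at hd3; linarith
      have := key t₀ s ht₀ hst (by rw [hTdef]; linarith) h1 h2
      rw [Real.dist_eq]
      exact this
  -- integrability of Y on intervals in [0, ∞)
  have hYint : ∀ a c : ℝ, 0 ≤ a → 0 ≤ c → IntervalIntegrable Y MeasureTheory.volume a c := by
    intro a c ha hc
    apply ContinuousOn.intervalIntegrable
    exact hYcont.mono (fun x hx => le_trans (le_min ha hc) hx.1)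
  set L : ℝ → ℝ := fun t => Y t - y₀ - σ / 2 * B t + b / 2 * ∫ s in (0:ℝ)..t, Y s with hLdef
  -- convergence of the correction integrals
  have htendL : ∀ t, 0 ≤ t → Filter.Tendsto
      (fun n => (1 / 2) * ∫ s in (0:ℝ)..t, εs n / Yn n s) Filter.atTop (nhds (L t)) := by
    intro t ht
    have hIoc : Set.uIoc (0:ℝ) t ⊆ Set.Ici 0 := by
      rw [Set.uIoc_of_le ht]
      exact fun x hx => hx.1.le
    have hIeq : ∀ n, (1 / 2 : ℝ) * (∫ s in (0:ℝ)..t, εs n / Yn n s)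
        = Yn n t - y₀ - σ / 2 * B t + b / 2 * ∫ s in (0:ℝ)..t, Yn n s := by
      intro n
      have heq := (hYn n).2.2 t ht
      have hsplit : (∫ s in (0:ℝ)..t, (εs n / Yn n s - b * Yn n s))
          = (∫ s in (0:ℝ)..t, εs n / Yn n s) - ∫ s in (0:ℝ)..t, b * Yn n s :=
        intervalIntegral.integral_sub ((hYn n).intInt_inv le_rfl ht)
          (((hYn n).intInt_Y le_rfl ht).const_mul b)
      have hmul : (∫ s in (0:ℝ)..t, b * Yn n s) = b * ∫ s in (0:ℝ)..t, Yn n s :=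
        intervalIntegral.integral_const_mul b (Yn n)
      rw [hsplit, hmul] at heq
      linarith [heq]
    have htendInt : Filter.Tendsto (fun n => ∫ s in (0:ℝ)..t, Yn n s) Filter.atTop
        (nhds (∫ s in (0:ℝ)..t, Y s)) := by
      apply intervalIntegral.tendsto_integral_filter_of_dominated_convergence (bound := Yn 0)
      · exact Filter.Eventually.of_forall (fun n =>
          ((hYn n).1.mono hIoc).aestronglyMeasurable measurableSet_uIoc)
      · refine Filter.Eventually.of_forall (fun n => MeasureTheory.ae_of_all _ (fun x hx => ?_))
        have hx0 : 0 ≤ x := hIoc hx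
        rw [Real.norm_eq_abs, abs_of_pos ((hYn n).2.1 x hx0)]
        exact haux x hx0 0 n (Nat.zero_le n)
      · exact (hYn 0).intInt_Y le_rfl ht
      · exact MeasureTheory.ae_of_all _ (fun x hx => htendY x (hIoc hx))
    have h2 : Filter.Tendsto
        (fun n => Yn n t - y₀ - σ / 2 * B t + b / 2 * ∫ s in (0:ℝ)..t, Yn n s)
        Filter.atTop (nhds (L t)) := by
      rw [hLdef]
      exact (((htendY t ht).sub tendsto_const_nhds).sub tendsto_const_nhds).add
        (tendsto_const_nhds.mul htendInt)
    exact h2.congr (fun n => (hIeq n).symm)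
  -- continuity of the primitive of Y
  have hFcont : ContinuousOn (fun t => ∫ s in (0:ℝ)..t, Y s) (Set.Ici 0) := by
    intro t₀ ht₀
    simp only [Set.mem_Ici] at ht₀
    set T := t₀ + 1 with hTdef
    obtain ⟨M0, hM0⟩ := isCompact_Icc.exists_bound_of_continuousOn
      (hYcont.mono (fun x (hx : x ∈ Set.Icc (0:ℝ) T) => hx.1))
    set M := max M0 1 with hMdef
    have hMpos : 0 < M := lt_of_lt_of_le one_pos (le_max_right _ _)
    have hM : ∀ s ∈ Set.Icc (0:ℝ) T, |Y s| ≤ M :=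
      fun s hs => (hM0 s hs).trans (le_max_left _ _)
    rw [ContinuousWithinAt, Metric.tendsto_nhdsWithin_nhds]
    intro ε hε
    refine ⟨min 1 (ε / (2 * M)), by positivity, ?_⟩
    intro s hs hdist
    simp only [Set.mem_Ici] at hs
    rw [Real.dist_eq] at hdist
    have hd1 : |s - t₀| < 1 := lt_of_lt_of_le hdist (min_le_left _ _)
    have hd2 : |s - t₀| < ε / (2 * M) := lt_of_lt_of_le hdist (min_le_right _ _)
    have hsT : s ≤ T := by
      rw [hTdef]
      have := le_abs_self (s - t₀)
      linarith
    have hdiff : (∫ x in (0:ℝ)..s, Y x) - (∫ x in (0:ℝ)..t₀, Y x) = ∫ x in t₀..s, Y x :=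
      intervalIntegral.integral_interval_sub_left (hYint 0 s le_rfl hs) (hYint 0 t₀ le_rfl ht₀)
    have hbound : ‖∫ x in t₀..s, Y x‖ ≤ M * |s - t₀| := by
      apply intervalIntegral.norm_integral_le_of_norm_le_const
      intro x hx
      have hx' : x ∈ Set.Icc (0:ℝ) T := by
        rcases le_total t₀ s with h | h
        · rw [Set.uIoc_of_le h] at hx
          exact ⟨ht₀.trans hx.1.le, hx.2.trans hsT⟩
        · rw [Set.uIoc_of_ge h] at hx
          exact ⟨hs.trans hx.1.le, hx.2.trans (by rw [hTdef]; linarith)⟩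
      rw [Real.norm_eq_abs]
      exact hM x hx'
    rw [Real.dist_eq, hdiff]
    have h1 : |∫ x in t₀..s, Y x| ≤ M * |s - t₀| := by
      rw [← Real.norm_eq_abs]; exact hbound
    have h2 : M * |s - t₀| < M * (ε / (2 * M)) := mul_lt_mul_of_pos_left hd2 hMpos
    have h3 : M * (ε / (2 * M)) = ε / 2 := by field_simp
    linarith
  have hLcont : ContinuousOn L (Set.Ici 0) := by
    rw [hLdef]
    exact ((hYcont.sub continuousOn_const).sub (continuousOn_const.mul hBc)).add
      (continuousOn_const.mul hFcont)
  exact ⟨Y, L, htendY, htendL, hYcont, hLcont⟩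
end

section
/- The limit reflection function grows only at zeros of the limit: let y₀, b, σ > 0, and let B : [0,∞) → ℝ be continuous with B(0) = 0 and locally Hölder continuous (there exists λ ∈ (0,1) such that for every T > 0 there is Λ_T ≥ 0 with |B(t) − B(s)| ≤ Λ_T·|t − s|^λ for all s, t ∈ [0,T]). Let (εₙ)ₙ be a strictly decreasing sequence of positive reals with εₙ → 0, for each n let Yₙ : [0,∞) → ℝ be continuous, strictly positive, and solve E(εₙ), and set Y(t) := limₙ Yₙ(t) and L(t) := limₙ (1/2)·∫₀ᵗ εₙ/Yₙ(s) ds. If t ≥ 0 satisfies Y(t) > 0, then there exists δ > 0 such that L is constant on [max(t − δ, 0), t + δ]. -/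
open MeasureTheory intervalIntegral Filter Set


lemma solves_integrable {y₀ b σ : ℝ} {B : ℝ → ℝ} {ε : ℝ} {Z : ℝ → ℝ}
    (h : SolvesE y₀ b σ B ε Z) {p q : ℝ} (hp : 0 ≤ p) (hq : 0 ≤ q) :
    IntervalIntegrable (fun s => ε / Z s - b * Z s) MeasureTheory.volume p q := by
  have hsub : Set.uIcc p q ⊆ Set.Ici 0 := fun x hx => le_trans (le_min hp hq) hx.1
  exact ((continuousOn_const.div (h.1.mono hsub)
    (fun x hx => ne_of_gt (h.2.1 x (hsub hx)))).sub
    (continuousOn_const.mul (h.1.mono hsub))).intervalIntegrable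

lemma solves_integrable' {y₀ b σ : ℝ} {B : ℝ → ℝ} {ε : ℝ} {Z : ℝ → ℝ}
    (h : SolvesE y₀ b σ B ε Z) {p q : ℝ} (hp : 0 ≤ p) (hq : 0 ≤ q) :
    IntervalIntegrable (fun s => ε / Z s) MeasureTheory.volume p q := by
  have hsub : Set.uIcc p q ⊆ Set.Ici 0 := fun x hx => le_trans (le_min hp hq) hx.1
  exact (continuousOn_const.div (h.1.mono hsub)
    (fun x hx => ne_of_gt (h.2.1 x (hsub hx)))).intervalIntegrable

lemma solves_sub {y₀ b σ : ℝ} {B : ℝ → ℝ} {ε : ℝ} {Z : ℝ → ℝ}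
    (h : SolvesE y₀ b σ B ε Z) {p q : ℝ} (hp : 0 ≤ p) (hpq : p ≤ q) :
    Z q - Z p = (1/2) * (∫ s in p..q, (ε / Z s - b * Z s)) + (σ/2) * (B q - B p) := by
  have hq : 0 ≤ q := hp.trans hpq
  have h1 := h.2.2 p hp
  have h2 := h.2.2 q hq
  have hsplit := intervalIntegral.integral_add_adjacent_intervals
    (solves_integrable h le_rfl hp) (solves_integrable h hp hq)
  rw [h1, h2, ← hsplit]; ring

lemma solves_upper {y₀ b σ : ℝ} {B : ℝ → ℝ} {ε : ℝ} {Z : ℝ → ℝ}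
    (h : SolvesE y₀ b σ B ε Z) (hε : 0 < ε) (hb : 0 ≤ b) {c p q : ℝ} (hc : 0 < c)
    (hp : 0 ≤ p) (hpq : p ≤ q) (hlow : ∀ s ∈ Set.Icc p q, c ≤ Z s) :
    Z q ≤ Z p + (ε / (2*c)) * (q - p) + (σ/2) * (B q - B p) := by
  have hq : 0 ≤ q := hp.trans hpq
  have hmono : (∫ s in p..q, (ε / Z s - b * Z s)) ≤ ∫ s in p..q, (ε / c) := by
    apply intervalIntegral.integral_mono_on hpq (solves_integrable h hp hq)
      intervalIntegrable_const
    intro x hx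
    have hZx := h.2.1 x (le_trans hp hx.1)
    have hcx := hlow x hx
    have h1 : ε / Z x ≤ ε / c := by gcongr
    have h2 : 0 ≤ b * Z x := mul_nonneg hb hZx.le
    linarith
  have hsub := solves_sub h hp hpq
  rw [intervalIntegral.integral_const] at hmono
  simp only [smul_eq_mul] at hmono
  have hcne : (c:ℝ) ≠ 0 := ne_of_gt hc
  have : (1/2 : ℝ) * ((q - p) * (ε / c)) = (ε / (2*c)) * (q - p) := by
    field_simp
  nlinarith

lemma solves_lower {y₀ b σ : ℝ} {B : ℝ → ℝ} {ε : ℝ} {Z : ℝ → ℝ}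
    (h : SolvesE y₀ b σ B ε Z) (hb : 0 ≤ b) (hε : 0 ≤ ε) {M p q : ℝ}
    (hp : 0 ≤ p) (hpq : p ≤ q) (hup : ∀ s ∈ Set.Icc p q, Z s ≤ M) :
    Z p - (b/2) * M * (q - p) + (σ/2) * (B q - B p) ≤ Z q := by
  have hq : 0 ≤ q := hp.trans hpq
  have hmono : (∫ s in p..q, (-(b*M) : ℝ)) ≤ ∫ s in p..q, (ε / Z s - b * Z s) := by
    apply intervalIntegral.integral_mono_on hpq intervalIntegrable_const
      (solves_integrable h hp hq)
    intro x hx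
    have hZx := h.2.1 x (le_trans hp hx.1)
    have h1 : 0 ≤ ε / Z x := div_nonneg hε hZx.le
    have h2 : b * Z x ≤ b * M := by
      exact mul_le_mul_of_nonneg_left (hup x hx) hb
    linarith
  have hsub := solves_sub h hp hpq
  rw [intervalIntegral.integral_const] at hmono
  simp only [smul_eq_mul] at hmono
  nlinarith

set_option maxHeartbeats 1000000 in
/-- The limit reflection function grows only at zeros of the limit process. -/
theorem stmt_13 (y₀ b σ : ℝ) (hy₀ : 0 < y₀) (hb : 0 < b) (hσ : 0 < σ)
    (B : ℝ → ℝ) (hBc : ContinuousOn B (Set.Ici 0)) (hB0 : B 0 = 0)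
    (hHol : ∃ lam : ℝ, 0 < lam ∧ lam < 1 ∧ ∀ T, 0 < T → ∃ Λ, 0 ≤ Λ ∧
      ∀ s ∈ Set.Icc (0:ℝ) T, ∀ t ∈ Set.Icc (0:ℝ) T, |B t - B s| ≤ Λ * |t - s| ^ lam)
    (εs : ℕ → ℝ) (hεpos : ∀ n, 0 < εs n) (hεdec : StrictAnti εs)
    (hεlim : Filter.Tendsto εs Filter.atTop (nhds 0))
    (Yn : ℕ → ℝ → ℝ) (hYn : ∀ n, SolvesE y₀ b σ B (εs n) (Yn n))
    (Y L : ℝ → ℝ)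
    (hY : ∀ t, 0 ≤ t → Filter.Tendsto (fun n => Yn n t) Filter.atTop (nhds (Y t)))
    (hL : ∀ t, 0 ≤ t → Filter.Tendsto
      (fun n => (1 / 2) * ∫ s in (0:ℝ)..t, εs n / Yn n s) Filter.atTop (nhds (L t)))
    (t : ℝ) (ht : 0 ≤ t) (hYt : 0 < Y t) :
    ∃ δ > (0:ℝ), ∀ u₁ ∈ Set.Icc (max (t - δ) 0) (t + δ),
      ∀ u₂ ∈ Set.Icc (max (t - δ) 0) (t + δ), L u₁ = L u₂ := by
  obtain ⟨lam, hl0, hl1, hH⟩ := hHol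
  obtain ⟨Λ, hΛ0, hΛ⟩ := hH (t + 2) (by linarith)
  obtain ⟨c, hc_def⟩ : ∃ c : ℝ, c = Y t / 2 := ⟨_, rfl⟩
  have hc : 0 < c := by rw [hc_def]; linarith
  obtain ⟨N, hN⟩ := Metric.tendsto_atTop.mp (hY t ht) (c/4) (by positivity)
  have hNt : ∀ n, N ≤ n → 7*c/4 ≤ Yn n t ∧ Yn n t ≤ 9*c/4 := by
    intro n hn
    have h := hN n hn
    rw [Real.dist_eq] at h
    have h2 := abs_lt.mp h
    constructor <;> linarith [h2.1, h2.2]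
  have hE : ∀ n, εs n ≤ εs 0 := fun n => hεdec.antitone (Nat.zero_le n)
  have hE0 : 0 < εs 0 := hεpos 0
  obtain ⟨M, hM_def⟩ : ∃ M : ℝ, M = 9*c/4 + εs 0/(2*c) + (σ/2)*Λ := ⟨_, rfl⟩
  have hM0 : 0 < M := by rw [hM_def]; positivity
  obtain ⟨K₁, hK1_def⟩ : ∃ K : ℝ, K = max (εs 0/(2*c)) ((b/2)*M) := ⟨_, rfl⟩
  obtain ⟨K₂, hK2_def⟩ : ∃ K : ℝ, K = (σ/2)*Λ := ⟨_, rfl⟩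
  have hK₁0 : 0 ≤ K₁ := by
    rw [hK1_def]; exact le_trans (by positivity) (le_max_left _ _)
  have hK₂0 : 0 ≤ K₂ := by rw [hK2_def]; positivity
  obtain ⟨δ, hδ_def⟩ :
      ∃ δ : ℝ, δ = min 1 (min (c/(8*(K₁+1))) ((c/(8*(K₂+1))) ^ (1/lam))) := ⟨_, rfl⟩
  have hδ : 0 < δ := by
    rw [hδ_def]
    refine lt_min one_pos (lt_min (by positivity) ?_)
    exact Real.rpow_pos_of_pos (by positivity) _
  have hδ1 : δ ≤ 1 := by rw [hδ_def]; exact min_le_left _ _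
  have hδlam0 : 0 ≤ δ ^ lam := Real.rpow_nonneg hδ.le _
  have hδlam1 : δ ^ lam ≤ 1 := Real.rpow_le_one hδ.le hδ1 hl0.le
  have hδK1 : K₁ * δ ≤ c/8 := by
    have h1 : δ ≤ c/(8*(K₁+1)) := by
      rw [hδ_def]; exact le_trans (min_le_right _ _) (min_le_left _ _)
    have h2 : K₁ * δ ≤ K₁ * (c/(8*(K₁+1))) := mul_le_mul_of_nonneg_left h1 hK₁0
    have h3 : K₁ * (c/(8*(K₁+1))) ≤ (K₁+1) * (c/(8*(K₁+1))) :=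
      mul_le_mul_of_nonneg_right (by linarith) (by positivity)
    have hne : K₁ + 1 ≠ 0 := by positivity
    have h4 : (K₁+1) * (c/(8*(K₁+1))) = c/8 := by field_simp
    linarith
  have hδK2 : K₂ * δ ^ lam ≤ c/8 := by
    have h1 : δ ≤ (c/(8*(K₂+1))) ^ (1/lam) := by
      rw [hδ_def]; exact le_trans (min_le_right _ _) (min_le_right _ _)
    have h2 : δ ^ lam ≤ ((c/(8*(K₂+1))) ^ (1/lam)) ^ lam :=
      Real.rpow_le_rpow hδ.le h1 hl0.le
    have h3 : ((c/(8*(K₂+1))) ^ (1/lam)) ^ lam = c/(8*(K₂+1)) := by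
      rw [← Real.rpow_mul (by positivity : (0:ℝ) ≤ c/(8*(K₂+1))),
        one_div, inv_mul_cancel₀ (ne_of_gt hl0), Real.rpow_one]
    have h4 : K₂ * δ ^ lam ≤ K₂ * (c/(8*(K₂+1))) := by
      apply mul_le_mul_of_nonneg_left _ hK₂0
      rw [← h3]; exact h2
    have h5 : K₂ * (c/(8*(K₂+1))) ≤ (K₂+1) * (c/(8*(K₂+1))) :=
      mul_le_mul_of_nonneg_right (by linarith) (by positivity)
    have hne : K₂ + 1 ≠ 0 := by positivity
    have h6 : (K₂+1) * (c/(8*(K₂+1))) = c/8 := by field_simp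
    linarith
  have hδsum : K₁ * δ + K₂ * δ ^ lam ≤ c/4 := by linarith
  have hBd : ∀ p q : ℝ, 0 ≤ p → p ≤ t+2 → 0 ≤ q → q ≤ t+2 → |q - p| ≤ δ →
      |B q - B p| ≤ Λ * δ ^ lam := by
    intro p q hp1 hp2 hq1 hq2 hpq
    refine le_trans (hΛ p ⟨hp1, hp2⟩ q ⟨hq1, hq2⟩) ?_
    exact mul_le_mul_of_nonneg_left (Real.rpow_le_rpow (abs_nonneg _) hpq hl0.le) hΛ0
  have hlow : ∀ n, N ≤ n → ∀ s ∈ Set.Icc (max (t-δ) 0) (t+δ), c ≤ Yn n s := by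
    intro n hn s hs
    by_contra hcon
    push_neg at hcon
    obtain ⟨h7, h9⟩ := hNt n hn
    have hYc := (hYn n).1
    have hs0 : 0 ≤ s := le_trans (le_max_right _ _) hs.1
    rcases le_or_gt t s with hts | hst
    · -- right side : t ≤ s ≤ t + δ
      set S : Set ℝ := Set.Icc t (t+δ) ∩ (Yn n) ⁻¹' (Set.Iic c) with hS_def
      have hsubS : Set.Icc t (t+δ) ⊆ Set.Ici (0:ℝ) := fun x hx => le_trans ht hx.1
      have hSclosed : IsClosed S :=
        (hYc.mono hsubS).preimage_isClosed_of_isClosed isClosed_Icc isClosed_Iic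
      have hSne : S.Nonempty := ⟨s, ⟨hts, hs.2⟩, hcon.le⟩
      have hSbdd : BddBelow S := ⟨t, fun x hx => hx.1.1⟩
      set u := sInf S with hu_def
      have huS : u ∈ S := hSclosed.csInf_mem hSne hSbdd
      have hu1 : t ≤ u := huS.1.1
      have hu2 : u ≤ t + δ := huS.1.2
      have huc : Yn n u ≤ c := huS.2
      have hu0 : 0 ≤ u := le_trans ht hu1
      have htu : t < u := by
        rcases eq_or_lt_of_le hu1 with he | h
        · exfalso; rw [← he] at huc; linarith
        · exact h
      have hucc : c ≤ Yn n u := by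
        by_contra hucc
        push_neg at hucc
        have hne : (nhdsWithin u (Set.Ico t u)).NeBot := by
          rw [← mem_closure_iff_nhdsWithin_neBot, closure_Ico (ne_of_lt htu)]
          exact ⟨hu1, le_refl u⟩
        haveI := hne
        have hcont : ContinuousWithinAt (Yn n) (Set.Ico t u) u :=
          (hYc u hu0).mono (fun x hx => le_trans ht hx.1)
        have hev1 : (Yn n) ⁻¹' (Set.Iio c) ∈ nhdsWithin u (Set.Ico t u) :=
          hcont (Iio_mem_nhds hucc)
        obtain ⟨x, hx⟩ := Filter.nonempty_of_mem (Filter.inter_mem hev1 self_mem_nhdsWithin)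
        have hxlt : Yn n x < c := hx.1
        have hxS : x ∈ S := ⟨⟨hx.2.1, le_trans hx.2.2.le hu2⟩, hxlt.le⟩
        exact absurd (csInf_le hSbdd hxS) (not_le.mpr hx.2.2)
      have hlow2 : ∀ x ∈ Set.Icc t u, c ≤ Yn n x := by
        intro x hx
        rcases eq_or_lt_of_le hx.2 with he | hlt
        · rw [he]; exact hucc
        · by_contra hxc
          push_neg at hxc
          have hxS : x ∈ S := ⟨⟨hx.1, le_trans hx.2 hu2⟩, hxc.le⟩
          exact absurd (csInf_le hSbdd hxS) (not_le.mpr hlt)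
      have hup : ∀ x ∈ Set.Icc t u, Yn n x ≤ M := by
        intro x hx
        have h1 := solves_upper (hYn n) (hεpos n) hb.le hc ht hx.1
          (fun z hz => hlow2 z ⟨hz.1, le_trans hz.2 hx.2⟩)
        have hxt : x - t ≤ δ := by linarith [hx.2, hu2]
        have hxt0 : 0 ≤ x - t := by linarith [hx.1]
        have hB1 : |B x - B t| ≤ Λ * δ ^ lam := by
          apply hBd t x ht (by linarith) (by linarith)
            (by linarith [hδ1]) (by rw [abs_of_nonneg hxt0]; exact hxt)
        have hdiv : εs n / (2*c) ≤ εs 0 / (2*c) := by gcongr; exact hE n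
        have hm1 : (εs n/(2*c))*(x-t) ≤ (εs 0/(2*c))*1 :=
          mul_le_mul hdiv (le_trans hxt hδ1) hxt0 (by positivity)
        have hm2 : (σ/2)*(B x - B t) ≤ (σ/2)*(Λ * δ ^ lam) :=
          mul_le_mul_of_nonneg_left (le_trans (le_abs_self _) hB1) (by positivity)
        have hm3 : (σ/2)*(Λ * δ ^ lam) ≤ (σ/2)*Λ := by
          nlinarith [mul_nonneg (mul_nonneg hσ.le hΛ0) (sub_nonneg.mpr hδlam1)]
        linarith [h1, h9, hm1, hm2, hm3, hM_def.le, hM_def.ge]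
      have h2 := solves_lower (hYn n) hb.le (hεpos n).le ht hu1 hup
      have hbM : (b/2)*M ≤ K₁ := by rw [hK1_def]; exact le_max_right _ _
      have hm4 : (b/2)*M*(u-t) ≤ K₁*δ :=
        mul_le_mul hbM (by linarith) (by linarith) hK₁0
      have hB2 : |B u - B t| ≤ Λ * δ ^ lam := by
        apply hBd t u ht (by linarith) hu0 (by linarith [hδ1])
          (by rw [abs_of_nonneg (by linarith : (0:ℝ) ≤ u - t)]; linarith)
      have hm5 : -(K₂ * δ ^ lam) ≤ (σ/2)*(B u - B t) := by
        have hgt : -(Λ * δ ^ lam) ≤ B u - B t := by linarith [neg_abs_le (B u - B t)]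
        have h' := mul_le_mul_of_nonneg_left hgt (by positivity : (0:ℝ) ≤ σ/2)
        have hK2e : (σ/2)*(Λ * δ ^ lam) = K₂ * δ ^ lam := by rw [hK2_def]; ring
        linarith
      linarith [h2, h7, huc, hm4, hm5, hδsum, hc]
    · -- left side : max (t-δ) 0 ≤ s < t
      set S : Set ℝ := Set.Icc s t ∩ (Yn n) ⁻¹' (Set.Iic c) with hS_def
      have hsubS : Set.Icc s t ⊆ Set.Ici (0:ℝ) := fun x hx => le_trans hs0 hx.1
      have hSclosed : IsClosed S :=
        (hYc.mono hsubS).preimage_isClosed_of_isClosed isClosed_Icc isClosed_Iic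
      have hSne : S.Nonempty := ⟨s, ⟨le_refl s, hst.le⟩, hcon.le⟩
      have hSbdd : BddAbove S := ⟨t, fun x hx => hx.1.2⟩
      set u := sSup S with hu_def
      have huS : u ∈ S := hSclosed.csSup_mem hSne hSbdd
      have hu1 : s ≤ u := huS.1.1
      have hu2 : u ≤ t := huS.1.2
      have huc : Yn n u ≤ c := huS.2
      have hu0 : 0 ≤ u := le_trans hs0 hu1
      have hut : u < t := by
        rcases eq_or_lt_of_le hu2 with he | h
        · exfalso; rw [he] at huc; linarith
        · exact h
      have hucc : c ≤ Yn n u := by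
        by_contra hucc
        push_neg at hucc
        have hne : (nhdsWithin u (Set.Ioc u t)).NeBot := by
          rw [← mem_closure_iff_nhdsWithin_neBot, closure_Ioc (ne_of_lt hut)]
          exact ⟨le_refl u, hu2⟩
        haveI := hne
        have hcont : ContinuousWithinAt (Yn n) (Set.Ioc u t) u :=
          (hYc u hu0).mono (fun x hx => le_trans hu0 hx.1.le)
        have hev1 : (Yn n) ⁻¹' (Set.Iio c) ∈ nhdsWithin u (Set.Ioc u t) :=
          hcont (Iio_mem_nhds hucc)
        obtain ⟨x, hx⟩ := Filter.nonempty_of_mem (Filter.inter_mem hev1 self_mem_nhdsWithin)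
        have hxlt : Yn n x < c := hx.1
        have hxS : x ∈ S := ⟨⟨le_trans hu1 hx.2.1.le, hx.2.2⟩, hxlt.le⟩
        exact absurd (le_csSup hSbdd hxS) (not_le.mpr hx.2.1)
      have hlow2 : ∀ x ∈ Set.Icc u t, c ≤ Yn n x := by
        intro x hx
        rcases eq_or_lt_of_le hx.1 with he | hlt
        · rw [← he]; exact hucc
        · by_contra hxc
          push_neg at hxc
          have hxS : x ∈ S := ⟨⟨le_trans hu1 hlt.le, hx.2⟩, hxc.le⟩
          exact absurd (le_csSup hSbdd hxS) (not_le.mpr hlt)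
      have h1 := solves_upper (hYn n) (hεpos n) hb.le hc hu0 hu2 hlow2
      have hsl : t - δ ≤ s := le_trans (le_max_left _ _) hs.1
      have htuδ : t - u ≤ δ := by linarith
      have hB2 : |B t - B u| ≤ Λ * δ ^ lam := by
        apply hBd u t hu0 (by linarith) ht (by linarith)
          (by rw [abs_of_nonneg (by linarith : (0:ℝ) ≤ t - u)]; linarith)
      have hdiv : εs n / (2*c) ≤ εs 0 / (2*c) := by gcongr; exact hE n
      have hEK : εs 0/(2*c) ≤ K₁ := by rw [hK1_def]; exact le_max_left _ _
      have hm1 : (εs n/(2*c))*(t-u) ≤ K₁*δ :=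
        mul_le_mul (le_trans hdiv hEK) htuδ (by linarith) hK₁0
      have hm2 : (σ/2)*(B t - B u) ≤ K₂ * δ ^ lam := by
        have h := le_trans (le_abs_self (B t - B u)) hB2
        have h' := mul_le_mul_of_nonneg_left h (by positivity : (0:ℝ) ≤ σ/2)
        have hK2e : (σ/2)*(Λ * δ ^ lam) = K₂ * δ ^ lam := by rw [hK2_def]; ring
        linarith
      linarith [h1, huc, h7, hm1, hm2, hδsum, hc]
  refine ⟨δ, hδ, ?_⟩
  have key : ∀ u₁ ∈ Set.Icc (max (t-δ) 0) (t+δ), ∀ u₂ ∈ Set.Icc (max (t-δ) 0) (t+δ),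
      u₁ ≤ u₂ → L u₁ = L u₂ := by
    intro u₁ h₁ u₂ h₂ h12
    have h01 : 0 ≤ u₁ := le_trans (le_max_right _ _) h₁.1
    have h02 : 0 ≤ u₂ := le_trans h01 h12
    have htend : Filter.Tendsto (fun n => (1/2 : ℝ) * ∫ x in u₁..u₂, εs n / Yn n x)
        Filter.atTop (nhds (L u₂ - L u₁)) := by
      have h := (hL u₂ h02).sub (hL u₁ h01)
      refine h.congr (fun n => ?_)
      rw [← intervalIntegral.integral_add_adjacent_intervals
        (solves_integrable' (hYn n) le_rfl h01) (solves_integrable' (hYn n) h01 h02)]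
      ring
    have hupper : Filter.Tendsto (fun n => εs n * ((u₂ - u₁)/(2*c)))
        Filter.atTop (nhds 0) := by
      have := hεlim.mul_const ((u₂ - u₁)/(2*c))
      simpa using this
    have htend0 : Filter.Tendsto (fun n => (1/2 : ℝ) * ∫ x in u₁..u₂, εs n / Yn n x)
        Filter.atTop (nhds 0) := by
      apply tendsto_of_tendsto_of_tendsto_of_le_of_le' tendsto_const_nhds hupper
      · refine Filter.Eventually.of_forall (fun n => ?_)
        have hnn : 0 ≤ ∫ x in u₁..u₂, εs n / Yn n x :=
          intervalIntegral.integral_nonneg h12 (fun x hx => div_nonneg (hεpos n).le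
            ((hYn n).2.1 x (le_trans h01 hx.1)).le)
        linarith
      · refine Filter.eventually_atTop.mpr ⟨N, fun n hn => ?_⟩
        have hmono : (∫ x in u₁..u₂, εs n / Yn n x) ≤ ∫ x in u₁..u₂, εs n / c := by
          apply intervalIntegral.integral_mono_on h12
            (solves_integrable' (hYn n) h01 h02) intervalIntegrable_const
          intro x hx
          have hxJ : x ∈ Set.Icc (max (t-δ) 0) (t+δ) :=
            ⟨le_trans h₁.1 hx.1, le_trans hx.2 h₂.2⟩
          have hcx := hlow n hn x hxJ
          gcongr
          exact (hεpos n).le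
        rw [intervalIntegral.integral_const, smul_eq_mul] at hmono
        have hfin : (1/2:ℝ) * ((u₂-u₁) * (εs n / c)) = εs n * ((u₂-u₁)/(2*c)) := by
          field_simp
        linarith
    have hfinal := tendsto_nhds_unique htend htend0
    linarith
  intro u₁ h₁ u₂ h₂
  rcases le_total u₁ u₂ with h | h
  · exact key u₁ h₁ u₂ h₂ h
  · exact (key u₂ h₂ u₁ h₁ h).symm
end

section
/- Independence of the limit from the approximating sequence: let y₀, b, σ > 0, and let B : [0,∞) → ℝ be continuous with B(0) = 0 and locally Hölder continuous (there exists λ ∈ (0,1) such that for every T > 0 there is Λ_T ≥ 0 with |B(t) − B(s)| ≤ Λ_T·|t − s|^λ for all s, t ∈ [0,T]). Let (εₙ)ₙ and (ε′ₙ)ₙ be two strictly decreasing sequences of positive reals converging to 0, and for each n let Yₙ and Y′ₙ be continuous, strictly positive solutions of E(εₙ) and E(ε′ₙ) respectively (with the same y₀, b, σ, B). Then limₙ Yₙ(t) = limₙ Y′ₙ(t) and limₙ (1/2)·∫₀ᵗ εₙ/Yₙ(s) ds = limₙ (1/2)·∫₀ᵗ ε′ₙ/Y′ₙ(s) ds for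 all t ≥ 0. -/
open MeasureTheory intervalIntegral Set Filter

lemma uIcc_subset_Ici {u v : ℝ} (hu : 0 ≤ u) (hv : 0 ≤ v) :
    Set.uIcc u v ⊆ Set.Ici 0 := fun x hx => le_trans (le_min hu hv) hx.1

lemma SolvesE.contOn_div {y₀ b σ ε : ℝ} {B Y : ℝ → ℝ} (h : SolvesE y₀ b σ B ε Y) :
    ContinuousOn (fun s => ε / Y s) (Set.Ici 0) :=
  continuousOn_const.div h.1 (fun s hs => (h.2.1 s hs).ne')

lemma SolvesE.intervalIntegrable_div {y₀ b σ ε : ℝ} {B Y : ℝ → ℝ}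
    (h : SolvesE y₀ b σ B ε Y) {u v : ℝ} (hu : 0 ≤ u) (hv : 0 ≤ v) :
    IntervalIntegrable (fun s => ε / Y s) volume u v :=
  (h.contOn_div.mono (uIcc_subset_Ici hu hv)).intervalIntegrable

lemma SolvesE.intervalIntegrable_self {y₀ b σ ε : ℝ} {B Y : ℝ → ℝ}
    (h : SolvesE y₀ b σ B ε Y) {u v : ℝ} (hu : 0 ≤ u) (hv : 0 ≤ v) :
    IntervalIntegrable Y volume u v :=
  (h.1.mono (uIcc_subset_Ici hu hv)).intervalIntegrable

lemma SolvesE.intervalIntegrable_f {y₀ b σ ε : ℝ} {B Y : ℝ → ℝ}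
    (h : SolvesE y₀ b σ B ε Y) {u v : ℝ} (hu : 0 ≤ u) (hv : 0 ≤ v) :
    IntervalIntegrable (fun s => ε / Y s - b * Y s) volume u v :=
  (h.intervalIntegrable_div hu hv).sub
    ((h.intervalIntegrable_self hu hv).const_mul b)

/-- Comparison: solutions of `E(ε)` are monotone in `ε`. -/
lemma solvesE_comparison {y₀ b σ ε₁ ε₂ : ℝ} {B Y₁ Y₂ : ℝ → ℝ} (hb : 0 ≤ b)
    (hε₁ : 0 ≤ ε₁) (hε : ε₁ ≤ ε₂)
    (h₁ : SolvesE y₀ b σ B ε₁ Y₁) (h₂ : SolvesE y₀ b σ B ε₂ Y₂) :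
    ∀ t, 0 ≤ t → Y₁ t ≤ Y₂ t := by
  intro t ht
  set f₁ : ℝ → ℝ := fun s => ε₁ / Y₁ s - b * Y₁ s with hf₁
  set f₂ : ℝ → ℝ := fun s => ε₂ / Y₂ s - b * Y₂ s with hf₂
  have key : ∀ s, 0 ≤ s →
      Y₁ s - Y₂ s = (1/2) * ((∫ u in (0:ℝ)..s, f₁ u) - ∫ u in (0:ℝ)..s, f₂ u) := by
    intro s hs
    have e₁ := h₁.2.2 s hs
    have e₂ := h₂.2.2 s hs
    rw [e₁, e₂]; ring
  by_contra hcon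
  push_neg at hcon
  set S : Set ℝ := {s | s ∈ Set.Icc 0 t ∧ Y₁ s - Y₂ s ≤ 0} with hS
  have hS0 : (0:ℝ) ∈ S := by
    refine ⟨⟨le_refl 0, ht⟩, ?_⟩
    have := key 0 (le_refl 0)
    simp [intervalIntegral.integral_same] at this
    linarith
  have hSbdd : BddAbove S := ⟨t, fun x hx => hx.1.2⟩
  have hSclosed : IsClosed S := by
    have hD : ContinuousOn (fun s => Y₁ s - Y₂ s) (Set.Icc 0 t) :=
      (h₁.1.mono (Set.Icc_subset_Ici_self)).sub (h₂.1.mono (Set.Icc_subset_Ici_self))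
    have : S = Set.Icc 0 t ∩ (fun s => Y₁ s - Y₂ s) ⁻¹' Set.Iic 0 := by
      ext x; simp [hS, Set.mem_Icc, and_assoc]
    rw [this]
    exact hD.preimage_isClosed_of_isClosed isClosed_Icc isClosed_Iic
  set τ := sSup S with hτdef
  have hτS : τ ∈ S := hSclosed.csSup_mem ⟨0, hS0⟩ hSbdd
  have hτ0 : 0 ≤ τ := hτS.1.1
  have hτt : τ ≤ t := hτS.1.2
  have hτlt : τ < t := by
    rcases lt_or_eq_of_le hτt with h | h
    · exact h
    · exfalso; rw [h] at hτS; linarith [hτS.2]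
  have hDpos : ∀ s ∈ Set.Ioc τ t, 0 < Y₁ s - Y₂ s := by
    intro s hs
    by_contra hc
    push_neg at hc
    have hsS : s ∈ S := ⟨⟨le_trans hτ0 hs.1.le, hs.2⟩, hc⟩
    exact absurd (le_csSup hSbdd hsS) (not_le.mpr hs.1)
  have hint_np : (∫ u in τ..t, (f₁ u - f₂ u)) ≤ 0 := by
    rw [intervalIntegral.integral_of_le hτlt.le]
    refine MeasureTheory.setIntegral_nonpos measurableSet_Ioc ?_
    intro s hs
    have hs0 : 0 ≤ s := le_trans hτ0 hs.1.le
    have hY₂pos : 0 < Y₂ s := h₂.2.1 s hs0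
    have hlt : Y₂ s < Y₁ s := by have := hDpos s hs; linarith
    have hdiv : ε₁ / Y₁ s ≤ ε₂ / Y₂ s := by
      calc ε₁ / Y₁ s ≤ ε₁ / Y₂ s := by
            apply div_le_div_of_nonneg_left hε₁ hY₂pos hlt.le
        _ ≤ ε₂ / Y₂ s := by apply div_le_div_of_nonneg_right hε hY₂pos.le
    have hbD : 0 ≤ b * (Y₁ s - Y₂ s) := mul_nonneg hb (by linarith)
    simp only [hf₁, hf₂]
    nlinarith
  have hi₁0τ := h₁.intervalIntegrable_f (le_refl (0:ℝ)) hτ0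
  have hi₁τt := h₁.intervalIntegrable_f hτ0 ht
  have hi₂0τ := h₂.intervalIntegrable_f (le_refl (0:ℝ)) hτ0
  have hi₂τt := h₂.intervalIntegrable_f hτ0 ht
  have hadd₁ : (∫ u in (0:ℝ)..τ, f₁ u) + ∫ u in τ..t, f₁ u = ∫ u in (0:ℝ)..t, f₁ u :=
    intervalIntegral.integral_add_adjacent_intervals hi₁0τ hi₁τt
  have hadd₂ : (∫ u in (0:ℝ)..τ, f₂ u) + ∫ u in τ..t, f₂ u = ∫ u in (0:ℝ)..t, f₂ u :=
    intervalIntegral.integral_add_adjacent_intervals hi₂0τ hi₂τt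
  have hsub : (∫ u in τ..t, (f₁ u - f₂ u)) = (∫ u in τ..t, f₁ u) - ∫ u in τ..t, f₂ u :=
    intervalIntegral.integral_sub hi₁τt hi₂τt
  have hkt := key t ht
  have hkτ := key τ hτ0
  have hDτ := hτS.2
  rw [hsub] at hint_np
  nlinarith

/-- Independence of the limit from the approximating sequence: the pointwise limits
of solutions of `E(εₙ)` and of the corresponding correction integrals do not depend
on the choice of the sequence `εₙ ↓ 0`. -/
theorem stmt_14 (y₀ b σ : ℝ) (hy₀ : 0 < y₀) (hb : 0 < b) (hσ : 0 < σ)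
    (B : ℝ → ℝ) (hBc : ContinuousOn B (Set.Ici 0)) (hB0 : B 0 = 0)
    (hHol : ∃ lam : ℝ, 0 < lam ∧ lam < 1 ∧ ∀ T, 0 < T → ∃ Λ, 0 ≤ Λ ∧
      ∀ s ∈ Set.Icc (0:ℝ) T, ∀ t ∈ Set.Icc (0:ℝ) T, |B t - B s| ≤ Λ * |t - s| ^ lam)
    (εs εs' : ℕ → ℝ)
    (hεpos : ∀ n, 0 < εs n) (hεdec : StrictAnti εs)
    (hεlim : Filter.Tendsto εs Filter.atTop (nhds 0))
    (hεpos' : ∀ n, 0 < εs' n) (hεdec' : StrictAnti εs')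
    (hεlim' : Filter.Tendsto εs' Filter.atTop (nhds 0))
    (Yn Yn' : ℕ → ℝ → ℝ)
    (hYn : ∀ n, SolvesE y₀ b σ B (εs n) (Yn n))
    (hYn' : ∀ n, SolvesE y₀ b σ B (εs' n) (Yn' n))
    (Y L Y' L' : ℝ → ℝ)
    (hY : ∀ t, 0 ≤ t → Filter.Tendsto (fun n => Yn n t) Filter.atTop (nhds (Y t)))
    (hL : ∀ t, 0 ≤ t → Filter.Tendsto
      (fun n => (1 / 2) * ∫ s in (0:ℝ)..t, εs n / Yn n s) Filter.atTop (nhds (L t)))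
    (hY' : ∀ t, 0 ≤ t → Filter.Tendsto (fun n => Yn' n t) Filter.atTop (nhds (Y' t)))
    (hL' : ∀ t, 0 ≤ t → Filter.Tendsto
      (fun n => (1 / 2) * ∫ s in (0:ℝ)..t, εs' n / Yn' n s) Filter.atTop (nhds (L' t))) :
    ∀ t, 0 ≤ t → Y t = Y' t ∧ L t = L' t := by
  -- Step 1: Y = Y' on [0,∞) by the comparison principle.
  have hEq : ∀ u, 0 ≤ u → Y u = Y' u := by
    intro u hu
    -- cross bounds
    have cross : ∀ n, Y' u ≤ Yn n u := by
      intro n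
      obtain ⟨m, hm⟩ := (hεlim'.eventually (gt_mem_nhds (hεpos n))).exists
      have h1 : Yn' m u ≤ Yn n u :=
        solvesE_comparison hb.le (hεpos' m).le hm.le (hYn' m) (hYn n) u hu
      have h2 : Y' u ≤ Yn' m u := by
        refine le_of_tendsto (hY' u hu) ?_
        filter_upwards [Filter.eventually_ge_atTop m] with k hk
        exact solvesE_comparison hb.le (hεpos' k).le
          (hεdec'.antitone hk) (hYn' k) (hYn' m) u hu
      linarith
    have cross' : ∀ n, Y u ≤ Yn' n u := by
      intro n
      obtain ⟨m, hm⟩ := (hεlim.eventually (gt_mem_nhds (hεpos' n))).exists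
      have h1 : Yn m u ≤ Yn' n u :=
        solvesE_comparison hb.le (hεpos m).le hm.le (hYn m) (hYn' n) u hu
      have h2 : Y u ≤ Yn m u := by
        refine le_of_tendsto (hY u hu) ?_
        filter_upwards [Filter.eventually_ge_atTop m] with k hk
        exact solvesE_comparison hb.le (hεpos k).le
          (hεdec.antitone hk) (hYn k) (hYn m) u hu
      linarith
    have h1 : Y' u ≤ Y u := ge_of_tendsto (hY u hu) (Filter.Eventually.of_forall cross)
    have h2 : Y u ≤ Y' u := ge_of_tendsto (hY' u hu) (Filter.Eventually.of_forall cross')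
    linarith
  intro t ht
  refine ⟨hEq t ht, ?_⟩
  -- Step 2: dominated convergence of ∫₀ᵗ Yn n.
  have hYnonneg : ∀ n s, 0 < s → s ≤ t → 0 < Yn n s := fun n s hs _ => (hYn n).2.1 s hs.le
  have hIY : Filter.Tendsto (fun n => ∫ s in Set.Ioc (0:ℝ) t, Yn n s)
      Filter.atTop (nhds (∫ s in Set.Ioc (0:ℝ) t, Y s)) := by
    refine MeasureTheory.tendsto_integral_of_dominated_convergence (Yn 0) ?_ ?_ ?_ ?_
    · intro n
      exact ((hYn n).1.mono (Set.Ioc_subset_Icc_self.trans (Set.Icc_subset_Ici_self))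
        ).aestronglyMeasurable measurableSet_Ioc
    · have : IntegrableOn (Yn 0) (Set.Icc 0 t) :=
        ((hYn 0).1.mono Set.Icc_subset_Ici_self).integrableOn_Icc
      exact this.mono_set Set.Ioc_subset_Icc_self
    · intro n
      refine (MeasureTheory.ae_restrict_iff' measurableSet_Ioc).mpr
        (Filter.Eventually.of_forall fun s hs => ?_)
      have hpos : 0 < Yn n s := (hYn n).2.1 s hs.1.le
      have hle : Yn n s ≤ Yn 0 s :=
        solvesE_comparison hb.le (hεpos n).le (hεdec.antitone (Nat.zero_le n))
          (hYn n) (hYn 0) s hs.1.le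
      rw [Real.norm_eq_abs, abs_of_pos hpos]
      exact hle
    · refine (MeasureTheory.ae_restrict_iff' measurableSet_Ioc).mpr
        (Filter.Eventually.of_forall fun s hs => hY s hs.1.le)
  -- Step 3: express the correction integral from the equation.
  have hEqn : ∀ n, (1 / 2) * (∫ s in (0:ℝ)..t, εs n / Yn n s)
      = Yn n t - y₀ - (σ / 2) * B t + (b / 2) * ∫ s in Set.Ioc (0:ℝ) t, Yn n s := by
    intro n
    have e := (hYn n).2.2 t ht
    have hsplit : (∫ s in (0:ℝ)..t, (εs n / Yn n s - b * Yn n s))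
        = (∫ s in (0:ℝ)..t, εs n / Yn n s) - b * ∫ s in (0:ℝ)..t, Yn n s := by
      rw [intervalIntegral.integral_sub ((hYn n).intervalIntegrable_div le_rfl ht)
        (((hYn n).intervalIntegrable_self le_rfl ht).const_mul b),
        intervalIntegral.integral_const_mul]
    have hioc : (∫ s in (0:ℝ)..t, Yn n s) = ∫ s in Set.Ioc (0:ℝ) t, Yn n s :=
      intervalIntegral.integral_of_le ht
    rw [hsplit, hioc] at e
    linarith
  have hEqn' : ∀ n, (1 / 2) * (∫ s in (0:ℝ)..t, εs' n / Yn' n s)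
      = Yn' n t - y₀ - (σ / 2) * B t + (b / 2) * ∫ s in Set.Ioc (0:ℝ) t, Yn' n s := by
    intro n
    have e := (hYn' n).2.2 t ht
    have hsplit : (∫ s in (0:ℝ)..t, (εs' n / Yn' n s - b * Yn' n s))
        = (∫ s in (0:ℝ)..t, εs' n / Yn' n s) - b * ∫ s in (0:ℝ)..t, Yn' n s := by
      rw [intervalIntegral.integral_sub ((hYn' n).intervalIntegrable_div le_rfl ht)
        (((hYn' n).intervalIntegrable_self le_rfl ht).const_mul b),
        intervalIntegral.integral_const_mul]
    have hioc : (∫ s in (0:ℝ)..t, Yn' n s) = ∫ s in Set.Ioc (0:ℝ) t, Yn' n s :=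
      intervalIntegral.integral_of_le ht
    rw [hsplit, hioc] at e
    linarith
  have hIY' : Filter.Tendsto (fun n => ∫ s in Set.Ioc (0:ℝ) t, Yn' n s)
      Filter.atTop (nhds (∫ s in Set.Ioc (0:ℝ) t, Y' s)) := by
    refine MeasureTheory.tendsto_integral_of_dominated_convergence (Yn' 0) ?_ ?_ ?_ ?_
    · intro n
      exact ((hYn' n).1.mono (Set.Ioc_subset_Icc_self.trans (Set.Icc_subset_Ici_self))
        ).aestronglyMeasurable measurableSet_Ioc
    · have : IntegrableOn (Yn' 0) (Set.Icc 0 t) :=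
        ((hYn' 0).1.mono Set.Icc_subset_Ici_self).integrableOn_Icc
      exact this.mono_set Set.Ioc_subset_Icc_self
    · intro n
      refine (MeasureTheory.ae_restrict_iff' measurableSet_Ioc).mpr
        (Filter.Eventually.of_forall fun s hs => ?_)
      have hpos : 0 < Yn' n s := (hYn' n).2.1 s hs.1.le
      have hle : Yn' n s ≤ Yn' 0 s :=
        solvesE_comparison hb.le (hεpos' n).le (hεdec'.antitone (Nat.zero_le n))
          (hYn' n) (hYn' 0) s hs.1.le
      rw [Real.norm_eq_abs, abs_of_pos hpos]
      exact hle
    · refine (MeasureTheory.ae_restrict_iff' measurableSet_Ioc).mpr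
        (Filter.Eventually.of_forall fun s hs => hY' s hs.1.le)
  -- the two limit integrands are equal
  have hIntEq : (∫ s in Set.Ioc (0:ℝ) t, Y' s) = ∫ s in Set.Ioc (0:ℝ) t, Y s :=
    MeasureTheory.setIntegral_congr_fun measurableSet_Ioc
      (fun s hs => (hEq s hs.1.le).symm)
  -- Step 4: identify L and L'.
  have hLlim : Filter.Tendsto (fun n => (1 / 2) * ∫ s in (0:ℝ)..t, εs n / Yn n s)
      Filter.atTop
      (nhds (Y t - y₀ - (σ / 2) * B t + (b / 2) * ∫ s in Set.Ioc (0:ℝ) t, Y s)) := by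
    have : Filter.Tendsto
        (fun n => Yn n t - y₀ - (σ / 2) * B t + (b / 2) * ∫ s in Set.Ioc (0:ℝ) t, Yn n s)
        Filter.atTop
        (nhds (Y t - y₀ - (σ / 2) * B t + (b / 2) * ∫ s in Set.Ioc (0:ℝ) t, Y s)) :=
      (((hY t ht).sub_const y₀).sub_const ((σ / 2) * B t)).add (hIY.const_mul (b / 2))
    exact this.congr (fun n => (hEqn n).symm)
  have hLlim' : Filter.Tendsto (fun n => (1 / 2) * ∫ s in (0:ℝ)..t, εs' n / Yn' n s)
      Filter.atTop
      (nhds (Y t - y₀ - (σ / 2) * B t + (b / 2) * ∫ s in Set.Ioc (0:ℝ) t, Y s)) := by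
    have : Filter.Tendsto
        (fun n => Yn' n t - y₀ - (σ / 2) * B t + (b / 2) * ∫ s in Set.Ioc (0:ℝ) t, Yn' n s)
        Filter.atTop
        (nhds (Y' t - y₀ - (σ / 2) * B t + (b / 2) * ∫ s in Set.Ioc (0:ℝ) t, Y' s)) :=
      (((hY' t ht).sub_const y₀).sub_const ((σ / 2) * B t)).add (hIY'.const_mul (b / 2))
    rw [hIntEq, ← hEq t ht] at this
    exact this.congr (fun n => (hEqn' n).symm)
  have h1 : L t = Y t - y₀ - (σ / 2) * B t + (b / 2) * ∫ s in Set.Ioc (0:ℝ) t, Y s :=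
    tendsto_nhds_unique (hL t ht) hLlim
  have h2 : L' t = Y t - y₀ - (σ / 2) * B t + (b / 2) * ∫ s in Set.Ioc (0:ℝ) t, Y s :=
    tendsto_nhds_unique (hL' t ht) hLlim'
  rw [h1, h2]
end
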